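/- arXiv:math/0612709 — 6 statements merged into one kernel-verified Lean document; each statement's English description precedes it below -/
import Mathlib

section
/- Let d ≥ 2, n ≥ 2, and let Σ be a map assigning to each d×n real data matrix X a d×d symmetric nonnegative definite matrix, such that Σ(BX) = B Σ(X) B′ for every d×d matrix B (including singular B), and Σ(X) is invariant under permutations of the columns of X. Then there is a constant c ≥ 0 such that for every X, Σ(X − X̄𝟏ₙ′) = c (X − X̄𝟏ₙ′)(X − X̄𝟏ₙ′)′, where X̄ is the vector of row means of X; i.e., on centered data matrices Σ is proportional to the sample covariance matrix. -/
open Matrix Finset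

namespace ScatterHelper

variable {d n : ℕ}

/-- rank-one "row matrix" with row `i0` equal to `v`. -/
def rM (i0 : Fin d) (v : Fin n → ℝ) : Matrix (Fin d) (Fin n) ℝ :=
  Matrix.vecMulVec (Pi.single i0 1) v

lemma vecMul_vecMulVec (x u : Fin d → ℝ) (v : Fin n → ℝ) :
    x ᵥ* Matrix.vecMulVec u v = (x ⬝ᵥ u) • v := by
  funext j
  simp [Matrix.vecMul, dotProduct, Matrix.vecMulVec_apply, Finset.sum_mul, mul_assoc]

variable (S : Matrix (Fin d) (Fin n) ℝ → Matrix (Fin d) (Fin d) ℝ)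

/-- the scalar functional `g`. -/
def gf (i0 : Fin d) (v : Fin n → ℝ) : ℝ := S (rM i0 v) i0 i0

lemma master (hequiv : ∀ B X, S (B * X) = B * S X * Bᵀ) (i0 : Fin d)
    (Y : Matrix (Fin d) (Fin n) ℝ) (w : Fin d → ℝ) :
    w ⬝ᵥ (S Y *ᵥ w) = gf S i0 (w ᵥ* Y) := by
  have h1 : Matrix.vecMulVec (Pi.single i0 1) w * Y = rM i0 (w ᵥ* Y) := by
    ext i j
    simp [rM, Matrix.mul_apply, Matrix.vecMulVec_apply, Matrix.vecMul, dotProduct,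
      Finset.mul_sum, mul_assoc]
  have h2 := hequiv (Matrix.vecMulVec (Pi.single i0 1) w) Y
  rw [h1] at h2
  have h3 : gf S i0 (w ᵥ* Y)
      = (Matrix.vecMulVec (Pi.single i0 1) w * S Y
          * (Matrix.vecMulVec (Pi.single i0 1) w)ᵀ) i0 i0 := by
    rw [gf, h2]
  rw [h3]
  simp only [Matrix.mul_apply, Matrix.vecMulVec_apply, Matrix.transpose_apply,
    dotProduct, Matrix.mulVec, Pi.single_eq_same, one_mul]
  simp only [Finset.sum_mul, Finset.mul_sum]
  rw [Finset.sum_comm]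
  exact Finset.sum_congr rfl fun k _ => Finset.sum_congr rfl fun l _ => by ring


/-- polarization of `g`. -/
noncomputable def pf (i0 : Fin d) (v w : Fin n → ℝ) : ℝ := (gf S i0 (v + w) - gf S i0 (v - w)) / 4

lemma gf_nonneg (hpsd : ∀ X, (S X).PosSemidef) (i0 : Fin d) (v : Fin n → ℝ) :
    0 ≤ gf S i0 v := by
  have h := (hpsd (rM i0 v)).dotProduct_mulVec_nonneg (Pi.single i0 1)
  have hs : star (Pi.single i0 1 : Fin d → ℝ) = Pi.single i0 1 := by
    funext x; simp
  rw [hs] at h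
  have : (Pi.single i0 1 : Fin d → ℝ) ⬝ᵥ (S (rM i0 v) *ᵥ Pi.single i0 1) = gf S i0 v := by
    simp [gf, Matrix.mulVec_single, single_dotProduct]
  linarith [this ▸ h]

lemma quad (hpsd : ∀ X, (S X).PosSemidef)
    (hequiv : ∀ B X, S (B * X) = B * S X * Bᵀ) {i0 i1 : Fin d} (h01 : i0 ≠ i1)
    (v v' : Fin n → ℝ) (s t : ℝ) :
    gf S i0 (s • v + t • v') =
      s ^ 2 * gf S i0 v + 2 * (s * t * pf S i0 v v') + t ^ 2 * gf S i0 v' := by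
  set Y := rM i0 v + rM i1 v' with hY
  have hsingle : (Pi.single i0 1 : Fin d → ℝ) ⬝ᵥ Pi.single i1 1 = 0 := by
    rw [single_dotProduct, one_mul, Pi.single_eq_of_ne h01]
  have hsingle' : (Pi.single i1 1 : Fin d → ℝ) ⬝ᵥ Pi.single i0 1 = 0 := by
    rw [single_dotProduct, one_mul, Pi.single_eq_of_ne h01.symm]
  have hw : ∀ s t : ℝ,
      ((s • (Pi.single i0 1 : Fin d → ℝ) + t • (Pi.single i1 1 : Fin d → ℝ))) ᵥ* Y
        = s • v + t • v' := by
    intro s t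
    rw [hY]
    simp only [Matrix.vecMul_add, Matrix.add_vecMul, rM, vecMul_vecMulVec,
      smul_dotProduct, hsingle, hsingle', single_dotProduct, one_mul,
      Pi.single_eq_same, zero_smul, smul_zero, add_zero, zero_add, one_smul,
      smul_smul, mul_one, smul_eq_mul, mul_zero]
  have hsym : S Y i1 i0 = S Y i0 i1 := by
    have h := (hpsd Y).1.apply i0 i1
    simpa using h
  have hq : ∀ s t : ℝ, gf S i0 (s • v + t • v') =
      s * s * S Y i0 i0 + 2 * (s * t * S Y i0 i1) + t * t * S Y i1 i1 := by
    intro s t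
    rw [← hw s t, ← master S hequiv i0 Y]
    simp only [add_dotProduct, smul_dotProduct, Matrix.mulVec_add,
      Matrix.mulVec_smul, dotProduct_add, dotProduct_smul,
      Matrix.mulVec_single_one, Matrix.col_apply, single_dotProduct, smul_eq_mul, mul_one, one_mul]
    rw [hsym]; ring
  have hv : gf S i0 v = S Y i0 i0 := by
    have h := hq 1 0; simpa using h
  have hv' : gf S i0 v' = S Y i1 i1 := by
    have h := hq 0 1; simpa using h
  have hsum : gf S i0 (v + v') = S Y i0 i0 + 2 * S Y i0 i1 + S Y i1 i1 := by
    have h := hq 1 1; simp at h; linarith [h]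
  have hdiff : gf S i0 (v - v') = S Y i0 i0 - 2 * S Y i0 i1 + S Y i1 i1 := by
    have h := hq 1 (-1)
    have harg : (1:ℝ) • v + (-1:ℝ) • v' = v - v' := by module
    rw [harg] at h; rw [h]; ring_nf
  have hp : pf S i0 v v' = S Y i0 i1 := by
    rw [pf, hsum, hdiff]; ring
  rw [hq s t, hv, hv', hp]; ring


section Abstract

variable {V : Type*} [AddCommGroup V] [Module ℝ V]
variable (g : V → ℝ) (p : V → V → ℝ)

/-- the quadratic-on-2-planes property. -/
def QProp : Prop :=
  ∀ (v v' : V) (s t : ℝ),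
    g (s • v + t • v') = s ^ 2 * g v + 2 * (s * t * p v v') + t ^ 2 * g v'

variable (hQ : QProp g p)
include hQ

lemma g_zero : g 0 = 0 := by
  have h := hQ 0 0 0 0; simpa using h

lemma g_smul (a : ℝ) (v : V) : g (a • v) = a ^ 2 * g v := by
  have h := hQ v 0 a 0
  simpa [g_zero g p hQ] using h

lemma p_self (v : V) : p v v = g v := by
  have h := hQ v v 1 1
  have harg : (1:ℝ) • v + (1:ℝ) • v = (2:ℝ) • v := by module
  rw [harg, g_smul g p hQ] at h
  nlinarith [h]

lemma p_eq (v v' : V) : p v v' = (g (v + v') - g (v - v')) / 4 := by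
  have h1 := hQ v v' 1 1
  have h2 := hQ v v' 1 (-1)
  have e1 : (1:ℝ) • v + (1:ℝ) • v' = v + v' := by module
  have e2 : (1:ℝ) • v + (-1:ℝ) • v' = v - v' := by module
  rw [e1] at h1; rw [e2] at h2
  rw [h1, h2]; ring

lemma g_neg (v : V) : g (-v) = g v := by
  have h := g_smul g p hQ (-1) v
  simpa using h

lemma p_symm (v w : V) : p v w = p w v := by
  rw [p_eq g p hQ, p_eq g p hQ]
  have e1 : w + v = v + w := by abel
  have e2 : w - v = -(v - w) := by abel
  rw [e1, e2, g_neg g p hQ]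

lemma p_smul_left (a : ℝ) (v w : V) : p (a • v) w = a * p v w := by
  have h1 := hQ v w a 1
  have h2 := hQ v w a (-1)
  have e1 : a • v + (1:ℝ) • w = a • v + w := by module
  have e2 : a • v + (-1:ℝ) • w = a • v - w := by module
  rw [e1] at h1; rw [e2] at h2
  rw [p_eq g p hQ (a • v) w, h1, h2]; ring

lemma p_smul_right (a : ℝ) (v w : V) : p v (a • w) = a * p v w := by
  rw [p_symm g p hQ, p_smul_left g p hQ, p_symm g p hQ]

lemma g_par (u v : V) : g (u + v) + g (u - v) = 2 * g u + 2 * g v := by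
  have h1 := hQ u v 1 1
  have h2 := hQ u v 1 (-1)
  have e1 : (1:ℝ) • u + (1:ℝ) • v = u + v := by module
  have e2 : (1:ℝ) • u + (-1:ℝ) • v = u - v := by module
  rw [e1] at h1; rw [e2] at h2
  rw [h1, h2]; ring

lemma p_add_left (x y z : V) : p (x + y) z = p x z + p y z := by
  have par1 := g_par g p hQ (x + z) (y + z)
  have par2 := g_par g p hQ (x - z) (y - z)
  have e1 : x + z + (y + z) = (x + y) + (2:ℝ) • z := by module
  have e2 : x + z - (y + z) = x - y := by abel
  have e3 : x - z + (y - z) = (x + y) - (2:ℝ) • z := by module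
  have e4 : x - z - (y - z) = x - y := by abel
  rw [e1, e2] at par1
  rw [e3, e4] at par2
  have h2z : p (x + y) ((2:ℝ) • z) = 2 * p (x + y) z := p_smul_right g p hQ 2 (x + y) z
  have hpe := p_eq g p hQ (x + y) ((2:ℝ) • z)
  have hx := p_eq g p hQ x z
  have hy := p_eq g p hQ y z
  rw [h2z] at hpe
  rw [hx, hy]
  linarith [hpe, par1, par2]

lemma p_add_right (x y z : V) : p x (y + z) = p x y + p x z := by
  rw [p_symm g p hQ, p_add_left g p hQ, p_symm g p hQ x y, p_symm g p hQ x z]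

lemma p_zero_left (z : V) : p 0 z = 0 := by
  have h := p_smul_left g p hQ 0 0 z
  simpa using h

lemma p_sum_left {ι : Type*} [DecidableEq ι] (s : Finset ι) (f : ι → V) (z : V) :
    p (∑ j ∈ s, f j) z = ∑ j ∈ s, p (f j) z := by
  induction s using Finset.induction_on with
  | empty => simpa using p_zero_left g p hQ z
  | insert _ _ hnotmem ih =>
    rw [Finset.sum_insert hnotmem, Finset.sum_insert hnotmem, p_add_left g p hQ, ih]

lemma g_expand {ι : Type*} [DecidableEq ι] (s : Finset ι) (c : ι → ℝ) (f : ι → V) :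
    g (∑ j ∈ s, c j • f j) = ∑ j ∈ s, ∑ k ∈ s, c j * c k * p (f j) (f k) := by
  rw [← p_self g p hQ, p_sum_left g p hQ]
  refine Finset.sum_congr rfl fun j _ => ?_
  rw [p_smul_left g p hQ, p_symm g p hQ, p_sum_left g p hQ, Finset.mul_sum]
  refine Finset.sum_congr rfl fun k _ => ?_
  rw [p_smul_left g p hQ, p_symm g p hQ (f k) (f j)]
  ring

end Abstract


def uv (j0 j : Fin n) : Fin n → ℝ := Pi.single j0 1 - Pi.single j 1

lemma gf_perm (hperm : ∀ X (σ : Equiv.Perm (Fin n)), S (X.submatrix id σ) = S X) (i0 : Fin d)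
    (σ : Equiv.Perm (Fin n)) (v : Fin n → ℝ) :
    gf S i0 (fun j => v (σ j)) = gf S i0 v := by
  have h : (rM i0 v).submatrix id σ = rM i0 (fun j => v (σ j)) := by
    ext i j; simp [rM, Matrix.vecMulVec_apply, Matrix.submatrix_apply]
  unfold gf
  rw [← h, hperm]

lemma pf_perm (hperm : ∀ X (σ : Equiv.Perm (Fin n)), S (X.submatrix id σ) = S X) (i0 : Fin d)
    (σ : Equiv.Perm (Fin n)) (v w : Fin n → ℝ) :
    pf S i0 (fun j => v (σ j)) (fun j => w (σ j)) = pf S i0 v w := by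
  unfold pf
  have h1 : (fun j => v (σ j)) + (fun j => w (σ j)) = fun j => (v + w) (σ j) := rfl
  have h2 : (fun j => v (σ j)) - (fun j => w (σ j)) = fun j => (v - w) (σ j) := rfl
  rw [h1, h2, gf_perm S hperm, gf_perm S hperm]

lemma g_centered (hpsd : ∀ X, (S X).PosSemidef)
    (hequiv : ∀ B X, S (B * X) = B * S X * Bᵀ)
    (hperm : ∀ X (σ : Equiv.Perm (Fin n)), S (X.submatrix id σ) = S X)
    {i0 i1 : Fin d} (h01 : i0 ≠ i1) {j0 j1 : Fin n} (hj01 : j0 ≠ j1)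
    (v : Fin n → ℝ) (hv : ∑ j, v j = 0) :
    gf S i0 v = gf S i0 (uv j0 j1) / 2 * (v ⬝ᵥ v) := by
  have hQg : QProp (gf S i0) (pf S i0) := fun v v' s t => quad S hpsd hequiv h01 v v' s t
  have hQdot : QProp (fun v : Fin n → ℝ => v ⬝ᵥ v) (fun v w : Fin n → ℝ => v ⬝ᵥ w) := by
    intro v v' s t
    simp only [add_dotProduct, dotProduct_add, smul_dotProduct,
      dotProduct_smul, smul_eq_mul]
    have : v' ⬝ᵥ v = v ⬝ᵥ v' := dotProduct_comm v' v
    rw [this]; ring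
  -- step 1: all g (uv j0 j) are equal
  have P1 : ∀ j : Fin n, j ≠ j0 → gf S i0 (uv j0 j) = gf S i0 (uv j0 j1) := by
    intro j hj
    by_cases hjj1 : j = j1
    · rw [hjj1]
    · have e0 : Equiv.swap j1 j j0 = j0 :=
        Equiv.swap_apply_of_ne_of_ne hj01 (Ne.symm hj)
      have hswap : (fun x => uv j0 j1 (Equiv.swap j1 j x)) = uv j0 j := by
        funext x
        simp only [uv, Pi.sub_apply, Pi.single_apply]
        simp only [Equiv.swap_apply_eq_iff, e0, Equiv.swap_apply_left]
      rw [← hswap, gf_perm S hperm]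
  -- step 2: cross terms
  have P2 : ∀ j k : Fin n, j ≠ j0 → k ≠ j0 → j ≠ k →
      pf S i0 (uv j0 j) (uv j0 k) = gf S i0 (uv j0 j1) / 2 := by
    intro j k hj hk hjk
    have hsum : uv j0 k = uv j0 j + (Pi.single j 1 - Pi.single k 1) := by
      unfold uv; abel
    have h1 : pf S i0 (uv j0 j) (uv j0 k)
        = gf S i0 (uv j0 j) + pf S i0 (uv j0 j) (Pi.single j 1 - Pi.single k 1) := by
      rw [hsum, p_add_right _ _ hQg, p_self _ _ hQg]
    have hA : (fun x => uv j0 j (Equiv.swap j0 j x)) = -(uv j0 j) := by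
      funext x
      simp only [uv, Pi.sub_apply, Pi.single_apply, Pi.neg_apply]
      simp only [Equiv.swap_apply_eq_iff, Equiv.swap_apply_left, Equiv.swap_apply_right]
      ring
    have hB : (fun x => (Pi.single j 1 - Pi.single k 1 : Fin n → ℝ) (Equiv.swap j0 j x))
        = uv j0 k := by
      funext x
      simp only [uv, Pi.sub_apply, Pi.single_apply]
      simp only [Equiv.swap_apply_eq_iff, Equiv.swap_apply_left, Equiv.swap_apply_right,
        Equiv.swap_apply_of_ne_of_ne hk (Ne.symm hjk)]
    have hP := pf_perm S hperm i0 (Equiv.swap j0 j) (uv j0 j)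
      (Pi.single j 1 - Pi.single k 1)
    rw [hA, hB] at hP
    have hneg : pf S i0 (-(uv j0 j)) (uv j0 k) = -pf S i0 (uv j0 j) (uv j0 k) := by
      have h := p_smul_left _ _ hQg (-1) (uv j0 j) (uv j0 k)
      simpa using h
    rw [hneg] at hP
    have := P1 j hj
    linarith [h1, hP, this]
  -- dot products of generators
  have Pdot : ∀ j k : Fin n, j ≠ j0 → k ≠ j0 →
      (uv j0 j) ⬝ᵥ (uv j0 k) = if j = k then 2 else 1 := by
    intro j k hj hk
    have hk' : ¬(j0 = k) := fun h => hk h.symm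
    by_cases hjk : j = k <;>
      simp [uv, sub_dotProduct, dotProduct_sub, single_dotProduct,
        dotProduct_single, Pi.single_apply, hj, hk', hjk] <;> norm_num
  have PP : ∀ j k : Fin n, j ≠ j0 → k ≠ j0 →
      pf S i0 (uv j0 j) (uv j0 k)
        = gf S i0 (uv j0 j1) / 2 * ((uv j0 j) ⬝ᵥ (uv j0 k)) := by
    intro j k hj hk
    by_cases hjk : j = k
    · subst hjk
      rw [p_self _ _ hQg, P1 j hj, Pdot j j hj hj, if_pos rfl]; ring
    · rw [P2 j k hj hk hjk, Pdot j k hj hk, if_neg hjk]; ring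
  -- decomposition of centered v
  have hdec : v = ∑ j ∈ Finset.univ.erase j0, (-v j) • uv j0 j := by
    funext x
    simp only [Finset.sum_apply, Pi.smul_apply, smul_eq_mul, uv, Pi.sub_apply, Pi.single_apply]
    by_cases hx : x = j0
    · have hsum0 : ∑ j ∈ Finset.univ.erase j0, v j + v j0 = 0 := by
        rw [Finset.sum_erase_add _ _ (Finset.mem_univ j0)]; exact hv
      have hterm : ∀ j ∈ Finset.univ.erase j0,
          -v j * ((if x = j0 then (1:ℝ) else 0) - (if x = j then 1 else 0)) = -v j := by
        intro j hj
        have hj' := (Finset.mem_erase.mp hj).1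
        rw [if_pos hx, if_neg (fun h : x = j => hj' (h.symm.trans hx))]
        ring
      rw [Finset.sum_congr rfl hterm, Finset.sum_neg_distrib, hx]
      linarith [hsum0]
    · have hterm : ∀ j ∈ Finset.univ.erase j0,
          -v j * ((if x = j0 then (1:ℝ) else 0) - (if x = j then 1 else 0))
            = if x = j then v j else 0 := by
        intro j hj
        have hj' := (Finset.mem_erase.mp hj).1
        by_cases h : x = j <;> simp [hx, h, hj']
      rw [Finset.sum_congr rfl hterm, Finset.sum_ite_eq]
      simp [Finset.mem_erase, hx]
  -- final computation
  have e1 : gf S i0 v = ∑ j ∈ Finset.univ.erase j0, ∑ k ∈ Finset.univ.erase j0,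
      (-v j) * (-v k) * pf S i0 (uv j0 j) (uv j0 k) := by
    conv_lhs => rw [hdec]
    exact g_expand _ _ hQg _ _ _
  have e2 : v ⬝ᵥ v = ∑ j ∈ Finset.univ.erase j0, ∑ k ∈ Finset.univ.erase j0,
      (-v j) * (-v k) * ((uv j0 j) ⬝ᵥ (uv j0 k)) := by
    conv_lhs => rw [hdec]
    exact g_expand _ _ hQdot _ _ _
  rw [e1, e2, Finset.mul_sum]
  refine Finset.sum_congr rfl fun j hj => ?_
  rw [Finset.mul_sum]
  refine Finset.sum_congr rfl fun k hk => ?_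
  rw [PP j k (Finset.mem_erase.mp hj).1 (Finset.mem_erase.mp hk).1]
  ring

end ScatterHelper

lemma sym_ext {m : ℕ} (A B : Matrix (Fin m) (Fin m) ℝ) (hA : Aᵀ = A) (hB : Bᵀ = B)
    (h : ∀ w : Fin m → ℝ, w ⬝ᵥ (A *ᵥ w) = w ⬝ᵥ (B *ᵥ w)) : A = B := by
  have hd : ∀ i, A i i = B i i := by
    intro i
    have hw := h (Pi.single i 1)
    simpa [Matrix.mulVec_single, single_dotProduct] using hw
  ext i k
  by_cases hik : i = k
  · rw [hik]; exact hd k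
  · have hw := h (Pi.single i 1 + Pi.single k 1)
    simp only [add_dotProduct, dotProduct_add, Matrix.mulVec_add,
      Matrix.mulVec_single_one, Matrix.col_apply, single_dotProduct, mul_one, one_mul] at hw
    have hAik : A k i = A i k := congrFun (congrFun hA i) k
    have hBik : B k i = B i k := congrFun (congrFun hB i) k
    have h1 := hd i
    have h2 := hd k
    linarith [hw]

open ScatterHelper in
/-- Theorem 5(a): a singularly affine equivariant, permutation-invariant scatter
functional on d×n data matrices (d ≥ 2, n ≥ 2), applied to centered data matrices,
is a nonnegative constant times the sample covariance matrix. -/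
theorem scatter_proportional_to_covariance {d n : ℕ} (hd : 2 ≤ d) (hn : 2 ≤ n)
    (S : Matrix (Fin d) (Fin n) ℝ → Matrix (Fin d) (Fin d) ℝ)
    (hpsd : ∀ X, (S X).PosSemidef)
    (hequiv : ∀ (B : Matrix (Fin d) (Fin d) ℝ) (X : Matrix (Fin d) (Fin n) ℝ),
      S (B * X) = B * S X * Bᵀ)
    (hperm : ∀ (X : Matrix (Fin d) (Fin n) ℝ) (σ : Equiv.Perm (Fin n)),
      S (X.submatrix id σ) = S X) :
    ∃ c : ℝ, 0 ≤ c ∧ ∀ X : Matrix (Fin d) (Fin n) ℝ,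
      S (X - Matrix.of fun i _ => (∑ j, X i j) / n) =
        c • ((X - Matrix.of fun i _ => (∑ j, X i j) / n) *
             (X - Matrix.of fun i _ => (∑ j, X i j) / n)ᵀ) := by
  have hperm2 : ∀ (X : Matrix (Fin d) (Fin n) ℝ) (σ : Equiv.Perm (Fin n)),
      S (X.submatrix id σ) = S X := hperm
  set i0 : Fin d := ⟨0, by omega⟩ with hi0
  set i1 : Fin d := ⟨1, by omega⟩ with hi1
  set j0 : Fin n := ⟨0, by omega⟩ with hj0
  set j1 : Fin n := ⟨1, by omega⟩ with hj1
  have h01 : i0 ≠ i1 := by simp [hi0, hi1, Fin.ext_iff]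
  have hj01 : j0 ≠ j1 := by simp [hj0, hj1, Fin.ext_iff]
  refine ⟨gf S i0 (uv j0 j1) / 2, by linarith [gf_nonneg S hpsd i0 (uv j0 j1)], ?_⟩
  intro X
  set Y : Matrix (Fin d) (Fin n) ℝ := X - Matrix.of fun i _ => (∑ j, X i j) / n with hYdef
  have hrow : ∀ i, ∑ j, Y i j = 0 := by
    intro i
    have hn0 : (n:ℝ) ≠ 0 := Nat.cast_ne_zero.mpr (by omega)
    simp only [hYdef, Matrix.sub_apply, Matrix.of_apply, Finset.sum_sub_distrib,
      Finset.sum_const, Finset.card_univ, Fintype.card_fin, nsmul_eq_mul]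
    field_simp
    simp
  have hcent : ∀ w : Fin d → ℝ, ∑ j, (w ᵥ* Y) j = 0 := by
    intro w
    calc ∑ j, (w ᵥ* Y) j = ∑ j, ∑ i, w i * Y i j := by
          simp [Matrix.vecMul, dotProduct]
      _ = ∑ i, ∑ j, w i * Y i j := Finset.sum_comm
      _ = ∑ i, w i * ∑ j, Y i j := by simp [Finset.mul_sum]
      _ = 0 := by simp [hrow]
  have hsymmS : (S Y)ᵀ = S Y := by
    ext i j
    simpa using (hpsd Y).1.apply i j
  have hsymmC : ((gf S i0 (uv j0 j1) / 2) • (Y * Yᵀ))ᵀ = (gf S i0 (uv j0 j1) / 2) • (Y * Yᵀ) := by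
    rw [Matrix.transpose_smul, Matrix.transpose_mul, Matrix.transpose_transpose]
  refine sym_ext _ _ hsymmS hsymmC ?_
  intro w
  rw [master S hequiv i0 Y w]
  rw [g_centered S hpsd hequiv hperm2 h01 hj01 (w ᵥ* Y) (hcent w)]
  rw [Matrix.smul_mulVec, dotProduct_smul, smul_eq_mul]
  rw [← Matrix.mulVec_mulVec, Matrix.dotProduct_mulVec, Matrix.mulVec_transpose]
end

section
/- There is no map Σ defined for all n and all d×n data matrices (d ≥ 2), taking values in d×d nonnegative definite symmetric matrices, invariant under column permutations and column duplication (i.e., depending only on the empirical measure), satisfying Σ(AX + v𝟏ₙ′) = AΣ(X)A′ for all invertible A and v ∈ ℝᵈ, weakly continuous as a function of the empirical measure, other than Σ ≡ 0. -/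
open Matrix MeasureTheory Filter

/-- The empirical measure of a d×n data matrix: the average of the point masses at
its columns. -/
noncomputable def empMeas {d n : ℕ} (X : Matrix (Fin d) (Fin n) ℝ) :
    Measure (Fin d → ℝ) :=
  (n : ENNReal)⁻¹ • ∑ j : Fin n, Measure.dirac (fun i => X i j)

/-- The one-dimensional configuration along the first coordinate axis given by `t`. -/
noncomputable def Yt {d n : ℕ} [NeZero d] (t : Fin n → ℝ) : Matrix (Fin d) (Fin n) ℝ :=
  Matrix.of fun i j => if i = 0 then t j else 0

/-- The rank-one matrix whose first row is `u` and whose other rows vanish. -/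
noncomputable def Au {d : ℕ} [NeZero d] (u : Fin d → ℝ) : Matrix (Fin d) (Fin d) ℝ :=
  Matrix.of fun i j => if i = 0 then u j else 0

lemma integral_empMeas {d n : ℕ} (hn : 0 < n) (X : Matrix (Fin d) (Fin n) ℝ)
    (f : BoundedContinuousFunction (Fin d → ℝ) ℝ) :
    ∫ x, f x ∂(empMeas X) = (n : ℝ)⁻¹ * ∑ j : Fin n, f (fun i => X i j) := by
  rw [empMeas, integral_smul_measure, integral_finset_sum_measure
    (fun j _ => f.integrable _)]
  simp [ENNReal.toReal_inv, integral_dirac]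

/-- The symmetrized polarization of `q`. -/
noncomputable def Bq {V : Type*} [AddCommGroup V] (q : V → ℝ) (u w : V) : ℝ :=
  (q (u + w) - q (u - w)) / 4

/-- A function that is a quadratic form on every plane is a quadratic form: expansion of a
finite sum. -/
lemma quad_sum {V : Type*} [AddCommGroup V] [Module ℝ V] (q : V → ℝ)
    (hp : ∀ x y : V, ∃ c : ℝ, ∀ α β : ℝ,
      q (α • x + β • y) = α ^ 2 * q x + α * β * c + β ^ 2 * q y)
    {ι : Type*} (s : Finset ι) (x : ι → V) :
    q (∑ a ∈ s, x a) = ∑ a ∈ s, ∑ b ∈ s, (q (x a + x b) - q (x a - x b)) / 4 := by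
  have hom : ∀ (α : ℝ) (u : V), q (α • u) = α ^ 2 * q u := by
    intro α u
    obtain ⟨c, h⟩ := hp u u
    have h0 := h α 0
    simp only [zero_smul, add_zero, mul_zero, zero_mul] at h0
    have : (0 : ℝ) ^ 2 * q u = 0 := by norm_num
    rw [this, add_zero] at h0
    exact h0
  have q0 : q 0 = 0 := by
    have := hom 0 0
    simp only [zero_smul] at this
    nlinarith [this]
  have hq_neg : ∀ w : V, q (-w) = q w := by
    intro w
    have := hom (-1) w
    norm_num at this
    exact this
  have hBform : ∀ (u w : V) (α : ℝ),
      q (α • u + w) - q (α • u - w) = α * (q (u + w) - q (u - w)) := by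
    intro u w α
    obtain ⟨c, h⟩ := hp u w
    have h1 := h α 1
    have h2 := h α (-1)
    have h3 := h 1 1
    have h4 := h 1 (-1)
    simp only [one_smul, neg_one_smul, ← sub_eq_add_neg, one_pow, neg_one_sq] at h1 h2 h3 h4
    rw [h1, h2, h3, h4]; ring
  have hpar : ∀ u w : V, q (u + w) + q (u - w) = 2 * q u + 2 * q w := by
    intro u w
    obtain ⟨c, h⟩ := hp u w
    have h3 := h 1 1
    have h4 := h 1 (-1)
    simp only [one_smul, neg_one_smul, ← sub_eq_add_neg, one_pow, neg_one_sq] at h3 h4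
    rw [h3, h4]; ring
  have hBadd : ∀ u u' w : V, Bq q (u + u') w = Bq q u w + Bq q u' w := by
    intro u u' w
    have e1 := hpar ((1/2 : ℝ) • (u + u') + w) ((1/2 : ℝ) • (u - u'))
    have e2 := hpar ((1/2 : ℝ) • (u + u') - w) ((1/2 : ℝ) • (u - u'))
    have k1 : (1/2 : ℝ) • (u + u') + w + (1/2 : ℝ) • (u - u') = u + w := by module
    have k2 : (1/2 : ℝ) • (u + u') + w - (1/2 : ℝ) • (u - u') = u' + w := by module
    have k3 : (1/2 : ℝ) • (u + u') - w + (1/2 : ℝ) • (u - u') = u - w := by module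
    have k4 : (1/2 : ℝ) • (u + u') - w - (1/2 : ℝ) • (u - u') = u' - w := by module
    rw [k1, k2] at e1
    rw [k3, k4] at e2
    have e3 := hBform (u + u') w (1/2 : ℝ)
    simp only [Bq]
    linarith [e1, e2, e3]
  have hB0 : ∀ w : V, Bq q 0 w = 0 := by
    intro w
    simp only [Bq, zero_add, zero_sub, hq_neg]
    ring
  have hBsymm : ∀ u w : V, Bq q u w = Bq q w u := by
    intro u w
    simp only [Bq]
    have h1 : w - u = -(u - w) := by abel
    rw [add_comm w u, h1, hq_neg]
  have hBsum : ∀ (w : V) (s' : Finset ι), Bq q (∑ a ∈ s', x a) w = ∑ a ∈ s', Bq q (x a) w := by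
    intro w s'
    induction s' using Finset.cons_induction with
    | empty => simpa using hB0 w
    | cons a s' ha ih => rw [Finset.sum_cons, hBadd, ih, Finset.sum_cons]
  have hqB : ∀ u : V, q u = Bq q u u := by
    intro u
    have h2 : u + u = (2 : ℝ) • u := (two_smul ℝ u).symm
    simp only [Bq, h2, sub_self, q0, hom]
    ring
  calc q (∑ a ∈ s, x a) = Bq q (∑ a ∈ s, x a) (∑ b ∈ s, x b) := hqB _
    _ = ∑ a ∈ s, Bq q (x a) (∑ b ∈ s, x b) := hBsum _ s
    _ = ∑ a ∈ s, ∑ b ∈ s, Bq q (x a) (x b) := by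
        refine Finset.sum_congr rfl fun a _ => ?_
        rw [hBsymm, hBsum _ s]
        exact Finset.sum_congr rfl fun b _ => hBsymm _ _
    _ = ∑ a ∈ s, ∑ b ∈ s, (q (x a + x b) - q (x a - x b)) / 4 := rfl

lemma quadform {d : ℕ} [NeZero d] (w : Fin d → ℝ) (M : Matrix (Fin d) (Fin d) ℝ) :
    (Au w * M * (Au w)ᵀ) 0 0 = ∑ b, (∑ a, w a * M a b) * w b := by
  simp [Matrix.mul_apply, Au, Matrix.transpose_apply]

/-- Theorem 5(b): an affinely equivariant scatter functional, defined for all n and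
all d×n data matrices (d ≥ 2), depending only on the empirical measure, and weakly
continuous, must be identically 0. -/
theorem no_weakly_continuous_equivariant_scatter {d : ℕ} (hd : 2 ≤ d)
    (S : (n : ℕ) → Matrix (Fin d) (Fin n) ℝ → Matrix (Fin d) (Fin d) ℝ)
    (hpsd : ∀ n X, (S n X).PosSemidef)
    (hemp : ∀ (m n : ℕ) (X : Matrix (Fin d) (Fin m) ℝ) (Y : Matrix (Fin d) (Fin n) ℝ),
      empMeas X = empMeas Y → S m X = S n Y)
    (hequiv : ∀ (n : ℕ) (A : Matrix (Fin d) (Fin d) ℝ) (v : Fin d → ℝ)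
      (X : Matrix (Fin d) (Fin n) ℝ), IsUnit A →
      S n (A * X + Matrix.of fun i _ => v i) = A * S n X * Aᵀ)
    (hcont : ∀ (nseq : ℕ → ℕ) (Xseq : (k : ℕ) → Matrix (Fin d) (Fin (nseq k)) ℝ)
      (n₀ : ℕ) (X₀ : Matrix (Fin d) (Fin n₀) ℝ),
      (∀ k, 1 ≤ nseq k) → 1 ≤ n₀ →
      (∀ f : BoundedContinuousFunction (Fin d → ℝ) ℝ,
        Tendsto (fun k => ∫ x, f x ∂(empMeas (Xseq k))) atTop
          (nhds (∫ x, f x ∂(empMeas X₀)))) →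
      ∀ i j, Tendsto (fun k => S (nseq k) (Xseq k) i j) atTop (nhds (S n₀ X₀ i j))) :
    ∀ (n : ℕ) (X : Matrix (Fin d) (Fin n) ℝ), 1 ≤ n → S n X = 0 := by
  haveI : NeZero d := ⟨by omega⟩
  have h01 : (0 : Fin d) ≠ 1 := by
    refine Fin.ne_of_val_ne ?_
    rw [Fin.val_zero, Fin.val_one']
    rw [Nat.mod_eq_of_lt (by omega)]
    omega
  have hd1 : d ≠ 1 := by omega
  -- Step 1 : S of the zero matrix vanishes.
  have hzero : ∀ n : ℕ, S n (0 : Matrix (Fin d) (Fin n) ℝ) = 0 := by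
    intro n
    have hu : IsUnit ((2 : ℝ) • (1 : Matrix (Fin d) (Fin d) ℝ)) := by
      rw [Matrix.isUnit_iff_isUnit_det, Matrix.det_smul, Matrix.det_one, mul_one]
      exact isUnit_iff_ne_zero.2 (by positivity)
    have h := hequiv n ((2 : ℝ) • 1) 0 (0 : Matrix (Fin d) (Fin n) ℝ) hu
    have hofz : (Matrix.of fun (i : Fin d) (_ : Fin n) => (0 : Fin d → ℝ) i)
        = (0 : Matrix (Fin d) (Fin n) ℝ) := by
      ext i j; simp
    rw [Matrix.mul_zero, hofz, zero_add] at h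
    have h2 : ((2 : ℝ) • (1 : Matrix (Fin d) (Fin d) ℝ)) * S n 0 *
        ((2 : ℝ) • (1 : Matrix (Fin d) (Fin d) ℝ))ᵀ = (4 : ℝ) • S n 0 := by
      rw [Matrix.transpose_smul, Matrix.transpose_one, Matrix.smul_mul, Matrix.smul_mul,
        Matrix.one_mul, Matrix.mul_smul, Matrix.mul_one, smul_smul]
      norm_num
    rw [h2] at h
    ext i j
    have h3 := congrFun (congrFun h i) j
    rw [Matrix.smul_apply, smul_eq_mul] at h3
    simp only [Matrix.zero_apply]
    linarith
  -- Step 2 : singular equivariance for rank-one maps `Au u`.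
  have hL2 : ∀ (n : ℕ), 1 ≤ n → ∀ (u : Fin d → ℝ) (X : Matrix (Fin d) (Fin n) ℝ),
      S n (Au u * X) = Au u * S n X * (Au u)ᵀ := by
    intro n hn u X
    set s : ℝ := if 0 ≤ u 0 then 1 else -1 with hs
    set ε : ℕ → ℝ := fun k => s * ((k : ℝ) + 1)⁻¹ with hε
    have hεne : ∀ k, ε k ≠ 0 := by
      intro k
      have h1 : ((k : ℝ) + 1)⁻¹ ≠ 0 := by positivity
      have h2 : s ≠ 0 := by
        rw [hs]; split_ifs <;> norm_num
      exact mul_ne_zero h2 h1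
    have hεval : ∀ k, ε k = s * ((k : ℝ) + 1)⁻¹ := fun k => rfl
    have hεu : ∀ k, ε k + u 0 ≠ 0 := by
      intro k
      have hk : (0 : ℝ) < ((k : ℝ) + 1)⁻¹ := by positivity
      rcases le_or_gt 0 (u 0) with h | h
      · have hpos : 0 < ε k := by
          rw [hεval, hs, if_pos h]; linarith
        positivity
      · have hneg : ε k < 0 := by
          rw [hεval, hs, if_neg (not_le.2 h)]; nlinarith
        intro hc; nlinarith
    have hε0 : Tendsto ε atTop (nhds 0) := by
      have h1 : Tendsto (fun k : ℕ => ((k : ℝ) + 1)⁻¹) atTop (nhds 0) := by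
        simpa [one_div] using (tendsto_one_div_add_atTop_nhds_zero_nat :
          Tendsto (fun n : ℕ => 1 / ((n : ℝ) + 1)) atTop (nhds 0))
      simpa using h1.const_mul s
    set Bk : ℕ → Matrix (Fin d) (Fin d) ℝ := fun k => Au u + ε k • 1 with hBk
    set w0 : Fin d → ℝ := Pi.single (0 : Fin d) (1 : ℝ) with hw0
    -- invertibility of the approximants
    have hunit : ∀ k, IsUnit (Bk k) := by
      intro k
      rw [Matrix.isUnit_iff_isUnit_det]
      have hAu_eq : Au u = Matrix.replicateCol Unit w0 * Matrix.replicateRow Unit u := by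
        ext i j
        rw [Matrix.mul_apply]
        simp [Au, hw0, Pi.single_apply, ite_mul]
      have h1 : Matrix.replicateCol Unit ((ε k)⁻¹ • w0) * Matrix.replicateRow Unit u
          = (ε k)⁻¹ • (Matrix.replicateCol Unit w0 * Matrix.replicateRow Unit u) := by
        rw [Matrix.replicateCol_smul, Matrix.smul_mul]
      have hform : Bk k = ε k • (1 +
          Matrix.replicateCol Unit ((ε k)⁻¹ • w0) *
          Matrix.replicateRow Unit u) := by
        show Au u + ε k • 1 = _
        rw [h1, smul_add, smul_smul, mul_inv_cancel₀ (hεne k), one_smul, ← hAu_eq, add_comm]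
      rw [hform, Matrix.det_smul, Matrix.det_one_add_replicateCol_mul_replicateRow]
      have hdot : u ⬝ᵥ ((ε k)⁻¹ • w0) = (ε k)⁻¹ * u 0 := by
        rw [dotProduct_smul, hw0, dotProduct_single]
        simp [smul_eq_mul, mul_comm]
      rw [hdot]
      have h1 : (1 : ℝ) + (ε k)⁻¹ * u 0 = (ε k)⁻¹ * (ε k + u 0) := by
        rw [mul_add, inv_mul_cancel₀ (hεne k)]
      rw [h1]
      refine isUnit_iff_ne_zero.2 (mul_ne_zero (pow_ne_zero _ (hεne k)) ?_)
      exact mul_ne_zero (inv_ne_zero (hεne k)) (hεu k)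
    have hSk : ∀ k, S n (Bk k * X) = Bk k * S n X * (Bk k)ᵀ := by
      intro k
      have h := hequiv n (Bk k) 0 X (hunit k)
      have h0 : Bk k * X + (Matrix.of fun (i : Fin d) (_ : Fin n) => (0 : Fin d → ℝ) i)
          = Bk k * X := by
        ext i j; simp
      rwa [h0] at h
    have hB : ∀ i a, Tendsto (fun k => Bk k i a) atTop (nhds (Au u i a)) := by
      intro i a
      have heq : (fun k => Bk k i a)
          = fun k => Au u i a + ε k * (1 : Matrix (Fin d) (Fin d) ℝ) i a := by
        funext k
        simp [hBk, Matrix.add_apply, Matrix.smul_apply, smul_eq_mul]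
      rw [heq]
      have := (hε0.mul_const ((1 : Matrix (Fin d) (Fin d) ℝ) i a)).const_add (Au u i a)
      simpa using this
    have hweak : ∀ f : BoundedContinuousFunction (Fin d → ℝ) ℝ,
        Tendsto (fun k => ∫ x, f x ∂(empMeas (Bk k * X))) atTop
          (nhds (∫ x, f x ∂(empMeas (Au u * X)))) := by
      intro f
      have hn0 : 0 < n := hn
      simp only [integral_empMeas hn0]
      refine Tendsto.const_mul _ (tendsto_finset_sum _ fun j _ => ?_)
      refine (f.continuous.tendsto _).comp ?_
      rw [tendsto_pi_nhds]
      intro i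
      simp only [Matrix.mul_apply]
      exact tendsto_finset_sum _ fun a _ => (hB i a).mul_const _
    have hLHS := hcont (fun _ => n) (fun k => Bk k * X) n (Au u * X)
      (fun _ => hn) hn hweak
    have hRHS : ∀ i j, Tendsto (fun k => (Bk k * S n X * (Bk k)ᵀ) i j) atTop
        (nhds ((Au u * S n X * (Au u)ᵀ) i j)) := by
      intro i j
      simp only [Matrix.mul_apply, Matrix.transpose_apply]
      exact tendsto_finset_sum _ fun b _ =>
        ((tendsto_finset_sum _ fun a _ => (hB i a).mul_const _).mul (hB j b))
    ext i j
    refine tendsto_nhds_unique ?_ (hRHS i j)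
    have := hLHS i j
    simpa only [hSk] using this
  -- Step 3 : the plane quadraticity of σ(t) = S(Yt t) 0 0.
  have hplane : ∀ (n : ℕ), 1 ≤ n → ∀ x y : Fin n → ℝ, ∃ c : ℝ, ∀ α β : ℝ,
      S n (Yt (α • x + β • y)) 0 0 = α ^ 2 * S n (Yt x) 0 0 + α * β * c
        + β ^ 2 * S n (Yt y) 0 0 := by
    intro n hn x y
    set Z : Matrix (Fin d) (Fin n) ℝ :=
      Matrix.of fun i j => if i = 0 then x j else if i = 1 then y j else 0 with hZ
    set u : ℝ → ℝ → (Fin d → ℝ) :=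
      fun α β => fun i => if i = 0 then α else if i = 1 then β else 0 with hu
    set M : Matrix (Fin d) (Fin d) ℝ := S n Z with hM
    have hsum : ∀ (α β : ℝ) (g : Fin d → ℝ), (∑ a, u α β a * g a) = α * g 0 + β * g 1 := by
      intro α β g
      have hterm : ∀ a : Fin d, u α β a * g a =
          (if a = 0 then α * g a else 0) + (if a = 1 then β * g a else 0) := by
        intro a
        by_cases h0 : a = 0
        · subst h0; simp [hu, hd1]
        · by_cases h1 : a = 1
          · subst h1; simp [hu, h0, hd1]
          · simp [hu, h0, h1]
      rw [Finset.sum_congr rfl fun a _ => hterm a, Finset.sum_add_distrib,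
        Finset.sum_ite_eq' Finset.univ (0 : Fin d) (fun a => α * g a),
        Finset.sum_ite_eq' Finset.univ (1 : Fin d) (fun a => β * g a)]
      simp
    have hAZ : ∀ α β : ℝ, Au (u α β) * Z = Yt (α • x + β • y) := by
      intro α β
      ext i j
      rw [Matrix.mul_apply]
      by_cases hi : i = 0
      · subst hi
        have hAu0 : ∀ a, Au (u α β) 0 a * Z a j = u α β a * Z a j := by
          intro a
          have : Au (u α β) 0 a = u α β a := by simp [Au]
          rw [this]
        rw [Finset.sum_congr rfl fun a _ => hAu0 a, hsum α β (fun a => Z a j)]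
        have hZ0 : Z 0 j = x j := by simp [hZ]
        have hZ1 : Z 1 j = y j := by simp [hZ, hd1]
        have hY : (Yt (α • x + β • y) : Matrix (Fin d) (Fin n) ℝ) 0 j
            = α * x j + β * y j := by simp [Yt]
        rw [hZ0, hZ1, hY]
      · have hz : ∀ a, Au (u α β) i a * Z a j = 0 := by
          intro a; simp [Au, hi]
        rw [Finset.sum_congr rfl fun a _ => hz a, Finset.sum_const_zero]
        simp [Yt, hi]
    have hmain : ∀ α β : ℝ, S n (Yt (α • x + β • y)) 0 0 =
        α ^ 2 * M 0 0 + α * β * (M 0 1 + M 1 0) + β ^ 2 * M 1 1 := by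
      intro α β
      rw [← hAZ α β, hL2 n hn (u α β) Z, quadform]
      have hin : ∀ b, (∑ a, u α β a * M a b) = α * M 0 b + β * M 1 b := fun b =>
        hsum α β (fun a => M a b)
      calc (∑ b, (∑ a, u α β a * M a b) * u α β b)
          = ∑ b, u α β b * (α * M 0 b + β * M 1 b) := by
            refine Finset.sum_congr rfl fun b _ => ?_
            rw [hin b, mul_comm]
        _ = α * (α * M 0 0 + β * M 1 0) + β * (α * M 0 1 + β * M 1 1) :=
            hsum α β (fun b => α * M 0 b + β * M 1 b)
        _ = α ^ 2 * M 0 0 + α * β * (M 0 1 + M 1 0) + β ^ 2 * M 1 1 := by ring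
    have hx : S n (Yt x) 0 0 = M 0 0 := by
      have h := hmain 1 0
      have he : (1 : ℝ) • x + (0 : ℝ) • y = x := by module
      rw [he] at h
      rw [h]; ring
    have hy : S n (Yt y) 0 0 = M 1 1 := by
      have h := hmain 0 1
      have he : (0 : ℝ) • x + (1 : ℝ) • y = y := by module
      rw [he] at h
      rw [h]; ring
    exact ⟨M 0 1 + M 1 0, fun α β => by rw [hmain α β, hx, hy]⟩
  -- homogeneity of σ
  have hhom : ∀ (N : ℕ), 1 ≤ N → ∀ (α : ℝ) (v : Fin N → ℝ),
      S N (Yt (α • v)) 0 0 = α ^ 2 * S N (Yt v) 0 0 := by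
    intro N hN α v
    obtain ⟨c, h⟩ := hplane N hN v v
    have h0 := h α 0
    have he : α • v + (0 : ℝ) • v = α • v := by module
    rw [he] at h0
    rw [h0]; ring
  -- integral over the empirical measure of the 1-column zero matrix
  have hX0int : ∀ f : BoundedContinuousFunction (Fin d → ℝ) ℝ,
      ∫ x, f x ∂(empMeas (0 : Matrix (Fin d) (Fin 1) ℝ)) = f 0 := by
    intro f
    rw [integral_empMeas Nat.one_pos]
    have h2 : ∀ j : Fin 1, f (fun i => (0 : Matrix (Fin d) (Fin 1) ℝ) i j) = f 0 :=
      fun j => rfl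
    rw [Finset.sum_congr rfl fun j _ => h2 j]
    all_goals simp
  -- Step 4 (KEY) : configurations with at most m nonzero points, diluted among many zeros,
  -- have vanishing σ.
  have hkey : ∀ m : ℕ, ∃ P : ℕ, ∀ N, P ≤ N → ∀ v : Fin N → ℝ,
      (Finset.univ.filter fun j => v j ≠ 0).card ≤ m → S N (Yt v) 0 0 = 0 := by
    intro m
    by_contra hC
    push_neg at hC
    choose N hNge v hvcard hvne using hC
    set g : ℕ → ℝ := fun k => S (N (k + 1)) (Yt (v (k + 1))) 0 0 with hg
    set a : ℕ → ℝ := fun k => (Real.sqrt |g k|)⁻¹ with ha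
    have hN1 : ∀ k : ℕ, 1 ≤ N (k + 1) := fun k => le_trans (by omega) (hNge (k + 1))
    have hweak : ∀ f : BoundedContinuousFunction (Fin d → ℝ) ℝ,
        Tendsto (fun k => ∫ x, f x ∂(empMeas (Yt (a k • v (k + 1))
          : Matrix (Fin d) (Fin (N (k + 1))) ℝ))) atTop
          (nhds (∫ x, f x ∂(empMeas (0 : Matrix (Fin d) (Fin 1) ℝ)))) := by
      intro f
      rw [hX0int f]
      have hbound : ∀ k : ℕ, ‖(∫ x, f x ∂(empMeas (Yt (a k • v (k + 1))
          : Matrix (Fin d) (Fin (N (k + 1))) ℝ))) - f 0‖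
          ≤ ((k : ℝ) + 1)⁻¹ * (2 * m * ‖f‖) := by
        intro k
        have hNpos : 0 < N (k + 1) := hN1 k
        have hNne : ((N (k + 1) : ℝ)) ≠ 0 := by positivity
        rw [integral_empMeas hNpos]
        set w : Fin (N (k + 1)) → ℝ := a k • v (k + 1) with hw
        have hsplit : (∑ j : Fin (N (k + 1)), f (fun i => (Yt w : Matrix (Fin d) _ ℝ) i j))
            - (N (k + 1) : ℝ) * f 0
            = ∑ j : Fin (N (k + 1)), (f (fun i => (Yt w : Matrix (Fin d) _ ℝ) i j) - f 0) := by
          rw [Finset.sum_sub_distrib, Finset.sum_const, Finset.card_univ, Fintype.card_fin,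
            nsmul_eq_mul]
        have goal1 : (N (k + 1) : ℝ)⁻¹ *
            (∑ j : Fin (N (k + 1)), f (fun i => (Yt w : Matrix (Fin d) _ ℝ) i j)) - f 0
            = (N (k + 1) : ℝ)⁻¹ *
              ∑ j : Fin (N (k + 1)), (f (fun i => (Yt w : Matrix (Fin d) _ ℝ) i j) - f 0) := by
          rw [← hsplit, mul_sub, ← mul_assoc, inv_mul_cancel₀ hNne, one_mul]
        rw [goal1]
        set F : Finset (Fin (N (k + 1))) := Finset.univ.filter fun j => w j ≠ 0 with hF
        have hvanish : ∀ j, w j = 0 →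
            f (fun i => (Yt w : Matrix (Fin d) _ ℝ) i j) - f 0 = 0 := by
          intro j hj
          have : (fun i => (Yt w : Matrix (Fin d) _ ℝ) i j) = (0 : Fin d → ℝ) := by
            funext i; simp [Yt, hj]
          rw [this, sub_self]
        have hterm : ∀ x : Fin d → ℝ, |f x - f 0| ≤ 2 * ‖f‖ := by
          intro x
          have h1 := f.norm_coe_le_norm x
          have h2 := f.norm_coe_le_norm 0
          rw [Real.norm_eq_abs] at h1 h2
          have h3 := abs_add_le (f x) (-(f 0))
          rw [abs_neg] at h3
          rw [sub_eq_add_neg]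
          linarith
        have hFcard : F.card ≤ m := by
          have hsub : F ⊆ Finset.univ.filter fun j => v (k + 1) j ≠ 0 := by
            intro j hj
            simp only [hF, Finset.mem_filter, Finset.mem_univ, true_and] at hj ⊢
            intro hc
            exact hj (by simp [hw, hc])
          exact le_trans (Finset.card_le_card hsub) (hvcard (k + 1))
        have hsum_bound : |∑ j : Fin (N (k + 1)),
            (f (fun i => (Yt w : Matrix (Fin d) _ ℝ) i j) - f 0)| ≤ 2 * m * ‖f‖ := by
          have heqF : ∑ j : Fin (N (k + 1)),
              (f (fun i => (Yt w : Matrix (Fin d) _ ℝ) i j) - f 0)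
              = ∑ j ∈ F, (f (fun i => (Yt w : Matrix (Fin d) _ ℝ) i j) - f 0) := by
            refine (Finset.sum_subset (Finset.subset_univ F) ?_).symm
            intro j _ hj
            simp only [hF, Finset.mem_filter, Finset.mem_univ, true_and, not_not] at hj
            exact hvanish j hj
          rw [heqF]
          calc |∑ j ∈ F, (f (fun i => (Yt w : Matrix (Fin d) _ ℝ) i j) - f 0)|
              ≤ ∑ j ∈ F, |f (fun i => (Yt w : Matrix (Fin d) _ ℝ) i j) - f 0| :=
                Finset.abs_sum_le_sum_abs _ _
            _ ≤ ∑ _j ∈ F, 2 * ‖f‖ := Finset.sum_le_sum fun j _ => hterm _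
            _ = F.card * (2 * ‖f‖) := by rw [Finset.sum_const, nsmul_eq_mul]
            _ ≤ m * (2 * ‖f‖) := by
                have : (0 : ℝ) ≤ 2 * ‖f‖ := by positivity
                exact mul_le_mul_of_nonneg_right (by exact_mod_cast hFcard) this
            _ = 2 * m * ‖f‖ := by ring
        rw [Real.norm_eq_abs, abs_mul, abs_of_nonneg (by positivity :
          (0:ℝ) ≤ (N (k + 1) : ℝ)⁻¹)]
        have hNk : ((k : ℝ) + 1) ≤ (N (k + 1) : ℝ) := by
          have := hNge (k + 1)
          exact_mod_cast (by exact_mod_cast this : ((k + 1 : ℕ) : ℝ) ≤ (N (k + 1) : ℝ))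
        calc (N (k + 1) : ℝ)⁻¹ * |∑ j : Fin (N (k + 1)),
            (f (fun i => (Yt w : Matrix (Fin d) _ ℝ) i j) - f 0)|
            ≤ (N (k + 1) : ℝ)⁻¹ * (2 * m * ‖f‖) := by
              refine mul_le_mul_of_nonneg_left hsum_bound (by positivity)
          _ ≤ ((k : ℝ) + 1)⁻¹ * (2 * m * ‖f‖) := by
              refine mul_le_mul_of_nonneg_right ?_ (by positivity)
              exact inv_anti₀ (by positivity) hNk
      have hb0 : Tendsto (fun k : ℕ => ((k : ℝ) + 1)⁻¹ * (2 * m * ‖f‖)) atTop (nhds 0) := by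
        have h1 : Tendsto (fun k : ℕ => ((k : ℝ) + 1)⁻¹) atTop (nhds 0) := by
          simpa [one_div] using (tendsto_one_div_add_atTop_nhds_zero_nat :
          Tendsto (fun n : ℕ => 1 / ((n : ℝ) + 1)) atTop (nhds 0))
        simpa using h1.mul_const (2 * m * ‖f‖)
      have h2 := squeeze_zero_norm hbound hb0
      have h3 := h2.add_const (f 0)
      simpa using h3
    have htd := hcont (fun k => N (k + 1)) (fun k => Yt (a k • v (k + 1))) 1
      (0 : Matrix (Fin d) (Fin 1) ℝ) hN1 le_rfl hweak 0 0
    rw [hzero 1] at htd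
    have htd' : Tendsto (fun k => S (N (k + 1))
        (Yt (a k • v (k + 1)) : Matrix (Fin d) (Fin (N (k + 1))) ℝ) 0 0) atTop (nhds 0) := by
      simpa using htd
    have habs1 : ∀ k, |S (N (k + 1))
        (Yt (a k • v (k + 1)) : Matrix (Fin d) (Fin (N (k + 1))) ℝ) 0 0| = 1 := by
      intro k
      rw [hhom _ (hN1 k) (a k) (v (k + 1))]
      have hgne : g k ≠ 0 := hvne (k + 1)
      have hsq : (a k) ^ 2 = |g k|⁻¹ := by
        have hak : a k = (Real.sqrt |g k|)⁻¹ := rfl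
        rw [hak, ← Real.sqrt_inv, Real.sq_sqrt (by positivity)]
      rw [hsq]
      rw [abs_mul, abs_inv, abs_abs]
      rw [inv_mul_cancel₀ (abs_ne_zero.2 hgne)]
    have h1 : Tendsto (fun k => |S (N (k + 1))
        (Yt (a k • v (k + 1)) : Matrix (Fin d) (Fin (N (k + 1))) ℝ) 0 0|) atTop (nhds 0) := by
      simpa using htd'.abs
    simp only [habs1] at h1
    have := tendsto_nhds_unique h1 tendsto_const_nhds
    norm_num at this
  -- Step 5 : σ vanishes identically.
  have hσ : ∀ (n : ℕ), 1 ≤ n → ∀ t : Fin n → ℝ, S n (Yt t) 0 0 = 0 := by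
    intro n hn t
    obtain ⟨P, hP⟩ := hkey (2 * n)
    set k := P + 1 with hk
    have hkn : P ≤ k * n := by
      calc P ≤ P + 1 := by omega
        _ = (P + 1) * 1 := by ring
        _ ≤ (P + 1) * n := Nat.mul_le_mul_left _ hn
        _ = k * n := by rw [hk]
    have hkn1 : 1 ≤ k * n := by
      have : 1 * 1 ≤ k * n := Nat.mul_le_mul (by omega) hn
      simpa using this
    set e := (finProdFinEquiv : Fin k × Fin n ≃ Fin (k * n)) with he
    set τ : Fin k → Fin (k * n) → ℝ :=
      fun a j => if (e.symm j).1 = a then t (e.symm j).2 else 0 with hτ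
    set rep : Fin (k * n) → ℝ := fun j => t (e.symm j).2 with hrep
    have hsumτ : ∑ a : Fin k, τ a = rep := by
      funext j
      simp only [hτ, hrep, Finset.sum_apply]
      simp
    -- empirical measures of `Yt rep` and `Yt t` agree
    have hempeq : empMeas (Yt rep : Matrix (Fin d) (Fin (k * n)) ℝ)
        = empMeas (Yt t : Matrix (Fin d) (Fin n) ℝ) := by
      unfold empMeas
      have h1 : (∑ j : Fin (k * n), Measure.dirac (α := Fin d → ℝ)
          (fun i => (Yt rep : Matrix (Fin d) _ ℝ) i j))
          = ∑ p : Fin k × Fin n, Measure.dirac (α := Fin d → ℝ)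
            (fun i => (Yt t : Matrix (Fin d) _ ℝ) i p.2) := by
        exact Fintype.sum_equiv e.symm _ _ fun j => rfl
      have h2 : (∑ p : Fin k × Fin n, Measure.dirac (α := Fin d → ℝ)
          (fun i => (Yt t : Matrix (Fin d) _ ℝ) i p.2))
          = (k : ENNReal) • ∑ b : Fin n, Measure.dirac (α := Fin d → ℝ)
            (fun i => (Yt t : Matrix (Fin d) _ ℝ) i b) := by
        rw [Fintype.sum_prod_type]
        have hconst : ∀ x : Fin k, (∑ y : Fin n, Measure.dirac (α := Fin d → ℝ)
            (fun i => (Yt t : Matrix (Fin d) _ ℝ) i (x, y).2))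
            = ∑ b : Fin n, Measure.dirac (α := Fin d → ℝ)
              (fun i => (Yt t : Matrix (Fin d) _ ℝ) i b) := fun x => rfl
        rw [Finset.sum_congr rfl fun x _ => hconst x, Finset.sum_const, Finset.card_univ,
          Fintype.card_fin]
        exact (Nat.cast_smul_eq_nsmul ENNReal k _).symm
      rw [h1, h2, smul_smul]
      congr 1
      have hkne : (k : ENNReal) ≠ 0 := by
        have hk0 : k ≠ 0 := by omega
        exact_mod_cast hk0
      have hktop : (k : ENNReal) ≠ ⊤ := ENNReal.natCast_ne_top k
      rw [Nat.cast_mul, ENNReal.mul_inv (Or.inl hkne) (Or.inl hktop)]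
      rw [mul_comm ((k : ENNReal))⁻¹ _, mul_assoc, ENNReal.inv_mul_cancel hkne hktop, mul_one]
    -- each pairwise combination of the τ's has sparse support
    have hcard1 : ∀ a : Fin k,
        (Finset.univ.filter fun j : Fin (k * n) => (e.symm j).1 = a).card ≤ n := by
      intro a
      have h : (Finset.univ.filter fun j : Fin (k * n) => (e.symm j).1 = a).card
          ≤ (Finset.univ : Finset (Fin n)).card := by
        apply Finset.card_le_card_of_injOn (fun j => (e.symm j).2)
        · intro j _
          exact Finset.mem_univ _
        · intro j1 h1 j2 h2 hsnd
          rw [Finset.mem_coe, Finset.mem_filter] at h1 h2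
          have : e.symm j1 = e.symm j2 := Prod.ext (h1.2.trans h2.2.symm) hsnd
          exact e.symm.injective this
      have huniv : (Finset.univ : Finset (Fin n)).card = n := by
        rw [Finset.card_univ, Fintype.card_fin]
      exact le_trans h (le_of_eq huniv)
    have hsupp : ∀ (a b : Fin k) (gg : Fin (k * n) → ℝ),
        (∀ j, gg j ≠ 0 → (e.symm j).1 = a ∨ (e.symm j).1 = b) →
        (Finset.univ.filter fun j => gg j ≠ 0).card ≤ 2 * n := by
      intro a b gg hgg
      have hsub : (Finset.univ.filter fun j => gg j ≠ 0)
          ⊆ (Finset.univ.filter fun j : Fin (k * n) => (e.symm j).1 = a)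
            ∪ (Finset.univ.filter fun j : Fin (k * n) => (e.symm j).1 = b) := by
        intro j hj
        simp only [Finset.mem_filter, Finset.mem_union, Finset.mem_univ, true_and] at hj ⊢
        exact hgg j hj
      calc (Finset.univ.filter fun j => gg j ≠ 0).card
          ≤ _ := Finset.card_le_card hsub
        _ ≤ _ := Finset.card_union_le _ _
        _ ≤ 2 * n := by
            have h1 := hcard1 a
            have h2 := hcard1 b
            omega
    -- apply the quadratic expansion
    have hq := quad_sum (fun ww : Fin (k * n) → ℝ => S (k * n) (Yt ww) 0 0)
      (fun x y => hplane (k * n) hkn1 x y) Finset.univ τ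
    have hτzero : ∀ a b : Fin k,
        S (k * n) (Yt (τ a + τ b) : Matrix (Fin d) (Fin (k * n)) ℝ) 0 0 = 0 ∧
        S (k * n) (Yt (τ a - τ b) : Matrix (Fin d) (Fin (k * n)) ℝ) 0 0 = 0 := by
      intro a b
      constructor
      · refine hP (k * n) hkn _ (hsupp a b _ ?_)
        intro j hj
        by_contra hc
        push_neg at hc
        have h1 : τ a j = 0 := by simp [hτ, hc.1]
        have h2 : τ b j = 0 := by simp [hτ, hc.2]
        exact hj (by simp [h1, h2])
      · refine hP (k * n) hkn _ (hsupp a b _ ?_)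
        intro j hj
        by_contra hc
        push_neg at hc
        have h1 : τ a j = 0 := by simp [hτ, hc.1]
        have h2 : τ b j = 0 := by simp [hτ, hc.2]
        exact hj (by simp [h1, h2])
    have hrep0 : S (k * n) (Yt rep : Matrix (Fin d) (Fin (k * n)) ℝ) 0 0 = 0 := by
      rw [← hsumτ]
      rw [hq]
      refine Finset.sum_eq_zero fun a _ => Finset.sum_eq_zero fun b _ => ?_
      rw [(hτzero a b).1, (hτzero a b).2]
      norm_num
    have := hemp (k * n) n (Yt rep) (Yt t) hempeq
    rw [← this]
    exact hrep0
  -- Step 6 : conclude.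
  intro n X hn
  have hAuX : ∀ u : Fin d → ℝ,
      Au u * X = Yt (fun j => ∑ i, u i * X i j) := by
    intro u
    ext i j
    by_cases hi : i = 0
    · subst hi
      simp [Au, Yt, Matrix.mul_apply]
    · simp [Au, Yt, Matrix.mul_apply, hi]
  have hQ : ∀ u : Fin d → ℝ, ∑ b, (∑ a, u a * S n X a b) * u b = 0 := by
    intro u
    have h1 := hL2 n hn u X
    have h2 : S n (Au u * X) 0 0 = 0 := by
      rw [hAuX]
      exact hσ n hn _
    rw [h1] at h2
    rw [quadform] at h2
    exact h2
  have hdiag : ∀ i, S n X i i = 0 := by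
    intro i
    have h := hQ (Pi.single i 1 : Fin d → ℝ)
    have hin : ∀ b, (∑ a, (Pi.single i 1 : Fin d → ℝ) a * S n X a b) = S n X i b := by
      intro b
      rw [Finset.sum_eq_single i (fun a _ hai => by simp [Pi.single_eq_of_ne hai])
        (fun h => absurd (Finset.mem_univ i) h)]
      simp
    rw [Finset.sum_congr rfl (fun b _ => by rw [hin b])] at h
    rw [Finset.sum_eq_single i (fun b _ hbi => by simp [Pi.single_eq_of_ne hbi])
      (fun h => absurd (Finset.mem_univ i) h)] at h
    simpa using h
  have hsymm : ∀ i j, S n X j i = S n X i j := by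
    intro i j
    have h := (hpsd n X).1
    have h2 := congrFun (congrFun h i) j
    rw [Matrix.conjTranspose_apply] at h2
    simpa using h2
  ext i j
  simp only [Matrix.zero_apply]
  by_cases hij : i = j
  · subst hij; exact hdiag i
  have h := hQ ((Pi.single i 1 : Fin d → ℝ) + (Pi.single j 1 : Fin d → ℝ))
  have hin : ∀ b, (∑ a, ((Pi.single i 1 : Fin d → ℝ) + (Pi.single j 1 : Fin d → ℝ)) a * S n X a b)
      = S n X i b + S n X j b := by
    intro b
    have hsplit : ∀ a, ((Pi.single i 1 : Fin d → ℝ) + (Pi.single j 1 : Fin d → ℝ)) a * S n X a b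
        = (Pi.single i 1 : Fin d → ℝ) a * S n X a b + (Pi.single j 1 : Fin d → ℝ) a * S n X a b := by
      intro a; simp [add_mul]
    rw [Finset.sum_congr rfl fun a _ => hsplit a, Finset.sum_add_distrib]
    rw [Finset.sum_eq_single i (fun a _ hai => by simp [Pi.single_eq_of_ne hai])
      (fun hh => absurd (Finset.mem_univ i) hh)]
    rw [Finset.sum_eq_single j (fun a _ haj => by simp [Pi.single_eq_of_ne haj])
      (fun hh => absurd (Finset.mem_univ j) hh)]
    simp
  rw [Finset.sum_congr rfl (fun b _ => by rw [hin b])] at h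
  have hout : ∀ b, (S n X i b + S n X j b) * ((Pi.single i 1 : Fin d → ℝ) + (Pi.single j 1 : Fin d → ℝ)) b
      = (S n X i b + S n X j b) * (Pi.single i 1 : Fin d → ℝ) b
        + (S n X i b + S n X j b) * (Pi.single j 1 : Fin d → ℝ) b := by
    intro b; simp [mul_add]
  rw [Finset.sum_congr rfl (fun b _ => hout b), Finset.sum_add_distrib] at h
  rw [Finset.sum_eq_single i (fun b _ hbi => by simp [Pi.single_eq_of_ne hbi])
    (fun hh => absurd (Finset.mem_univ i) hh)] at h
  rw [Finset.sum_eq_single j (fun b _ hbj => by simp [Pi.single_eq_of_ne hbj])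
    (fun hh => absurd (Finset.mem_univ j) hh)] at h
  simp only [Pi.single_eq_same, mul_one] at h
  have hii := hdiag i
  have hjj := hdiag j
  have hs := hsymm i j
  linarith
end

section
/- Let V be a real vector space and Q a probability measure on a σ-algebra containing all finite-dimensional affine hyperplanes. For each j ≥ 0, there exists a finite or countable family {V_{ji}} of j-dimensional hyperplanes such that, setting W_j := W_{j-1} ∪ ⋃ᵢ V_{ji} (with W_{-1} = ∅), every j-dimensional hyperplane H satisfies Q(H \ W_j) = 0. -/
/-!
Build `W j` by recursion: it is `W_{<j} := ⋃ k < j, W k` together with every `j`-dimensional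
hyperplane `H` with `Q (H \ W_{<j}) ≠ 0`. Then `Q (H \ W j) = 0` holds by construction, and only
countability needs an argument. Two distinct `j`-dimensional hyperplanes meet in the empty set
or in a hyperplane of dimension `k < j`, which is already `Q`-almost contained in `W k ⊆ W_{<j}`.
So the sets `H \ W_{<j}` are pairwise `Q`-a.e. disjoint, and a finite measure (indeed any
s-finite one) gives positive mass to only countably many such sets.
-/

open MeasureTheory

/-- `H` is a `j`-dimensional affine hyperplane in `V`: a translate of a
`j`-dimensional linear subspace. -/
def IsAffineHyp {V : Type*} [AddCommGroup V] [Module ℝ V] (j : ℕ) (H : Set V) : Prop :=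
  ∃ (T : Submodule ℝ V) (x : V), FiniteDimensional ℝ T ∧ Module.finrank ℝ T = j ∧
    H = (fun u => x + u) '' (T : Set V)

open Function Pointwise

theorem MeasureTheory.Measure.countable_of_pairwise_aedisjoint {α ι : Type*} [MeasurableSpace α]
    {μ : Measure α} [SFinite μ] {S : Set ι} {f : ι → Set α}
    (hmeas : ∀ i ∈ S, NullMeasurableSet (f i) μ) (hpos : ∀ i ∈ S, μ (f i) ≠ 0)
    (hdisj : S.Pairwise (AEDisjoint μ on f)) : S.Countable := by
  have h := Measure.countable_meas_pos_of_disjoint_iUnion₀ (μ := μ) (As := fun i : S => f i)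
    (fun i => hmeas i i.2) (fun i₁ i₂ hne => hdisj i₁.2 i₂.2 (Subtype.coe_ne_coe.2 hne))
  have huniv : {i : S | 0 < μ (f i)} = Set.univ :=
    Set.eq_univ_of_forall fun i => pos_iff_ne_zero.2 (hpos i i.2)
  rw [huniv, Set.countable_univ_iff] at h
  exact Set.countable_coe_iff.1 h

theorem Submodule.finrank_inf_lt_of_ne {K V : Type*} [DivisionRing K] [AddCommGroup V] [Module K V]
    {T₁ T₂ : Submodule K V} [FiniteDimensional K T₁] [FiniteDimensional K T₂]
    (hrk : Module.finrank K T₁ = Module.finrank K T₂) (hne : T₁ ≠ T₂) :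
    Module.finrank K ↥(T₁ ⊓ T₂) < Module.finrank K T₁ := by
  refine Submodule.finrank_lt_finrank_of_lt (inf_le_left.lt_of_ne fun h => hne ?_)
  exact Submodule.eq_of_le_of_finrank_eq (inf_eq_left.1 h) hrk

namespace IsAffineHyp

variable {V : Type*} [AddCommGroup V] [Module ℝ V] {j : ℕ} {H H₁ H₂ : Set V}

theorem exists_eq_image_add_of_mem (h : IsAffineHyp j H) {y : V} (hy : y ∈ H) :
    ∃ T : Submodule ℝ V, FiniteDimensional ℝ T ∧ Module.finrank ℝ T = j ∧
      H = (fun u => y + u) '' (T : Set V) := by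
  obtain ⟨T, x, hfd, hrk, rfl⟩ := h
  obtain ⟨t, ht, rfl⟩ := hy
  refine ⟨T, hfd, hrk, ?_⟩
  change x +ᵥ (T.toAddSubgroup : Set V) = (x + t) +ᵥ (T.toAddSubgroup : Set V)
  rw [leftAddCoset_eq_iff]
  simpa using ht

theorem inter_eq_empty_or_exists_lt (h₁ : IsAffineHyp j H₁) (h₂ : IsAffineHyp j H₂)
    (hne : H₁ ≠ H₂) : H₁ ∩ H₂ = ∅ ∨ ∃ k < j, IsAffineHyp k (H₁ ∩ H₂) := by
  refine (H₁ ∩ H₂).eq_empty_or_nonempty.imp id ?_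
  rintro ⟨y, hy₁, hy₂⟩
  obtain ⟨T₁, _, hrk₁, rfl⟩ := h₁.exists_eq_image_add_of_mem hy₁
  obtain ⟨T₂, _, hrk₂, rfl⟩ := h₂.exists_eq_image_add_of_mem hy₂
  have hT : T₁ ≠ T₂ := by rintro rfl; exact hne rfl
  refine ⟨_, hrk₁ ▸ Submodule.finrank_inf_lt_of_ne (hrk₁.trans hrk₂.symm) hT,
    T₁ ⊓ T₂, y, inferInstance, rfl, ?_⟩
  rw [← Set.image_inter (add_right_injective y)]
  rfl

end IsAffineHyp

section Skeleton

variable {V : Type*} [AddCommGroup V] [Module ℝ V] [MeasurableSpace V] (Q : Measure V)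

noncomputable def hyperplaneSkeleton : ℕ → Set V
  | j => (⋃ k < j, hyperplaneSkeleton k) ∪
      ⋃₀ {H | IsAffineHyp j H ∧ Q (H \ ⋃ k < j, hyperplaneSkeleton k) ≠ 0}

def skeletonHyperplanes (j : ℕ) : Set (Set V) :=
  {H | IsAffineHyp j H ∧ Q (H \ ⋃ k < j, hyperplaneSkeleton Q k) ≠ 0}

theorem hyperplaneSkeleton_eq (j : ℕ) :
    hyperplaneSkeleton Q j = (⋃ k < j, hyperplaneSkeleton Q k) ∪ ⋃₀ skeletonHyperplanes Q j := by
  rw [hyperplaneSkeleton]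
  rfl

variable {Q}

theorem measure_diff_hyperplaneSkeleton {j : ℕ} {H : Set V} (h : IsAffineHyp j H) :
    Q (H \ hyperplaneSkeleton Q j) = 0 := by
  rw [hyperplaneSkeleton_eq]
  by_cases h0 : Q (H \ ⋃ k < j, hyperplaneSkeleton Q k) = 0
  · exact measure_mono_null (Set.sdiff_subset_sdiff_right Set.subset_union_left) h0
  · have hsub : H ⊆ ⋃₀ skeletonHyperplanes Q j := Set.subset_sUnion_of_mem ⟨h, h0⟩
    rw [Set.sdiff_eq_empty.2 (hsub.trans Set.subset_union_right), measure_empty]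

theorem aedisjoint_diff_iUnion_hyperplaneSkeleton {j : ℕ} {H₁ H₂ : Set V}
    (h₁ : IsAffineHyp j H₁) (h₂ : IsAffineHyp j H₂) (hne : H₁ ≠ H₂) :
    AEDisjoint Q (H₁ \ ⋃ k < j, hyperplaneSkeleton Q k) (H₂ \ ⋃ k < j, hyperplaneSkeleton Q k) := by
  rw [AEDisjoint, ← Set.sdiff_inter_distrib_right]
  rcases h₁.inter_eq_empty_or_exists_lt h₂ hne with he | ⟨k, hk, hH⟩
  · simp [he]
  · exact measure_mono_null (Set.sdiff_subset_sdiff_right (Set.subset_iUnion₂ k hk))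
      (measure_diff_hyperplaneSkeleton hH)

theorem countable_skeletonHyperplanes [SFinite Q] {j : ℕ}
    (hmeas : ∀ H : Set V, IsAffineHyp j H → MeasurableSet H)
    (hlow : ∀ k < j, MeasurableSet (hyperplaneSkeleton Q k)) :
    (skeletonHyperplanes Q j).Countable :=
  Measure.countable_of_pairwise_aedisjoint
    (fun H hH => ((hmeas H hH.1).diff (.iUnion fun k => .iUnion (hlow k))).nullMeasurableSet)
    (fun _ hH => hH.2)
    (fun _ hH₁ _ hH₂ hne => aedisjoint_diff_iUnion_hyperplaneSkeleton hH₁.1 hH₂.1 hne)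

theorem measurableSet_hyperplaneSkeleton [SFinite Q]
    (hmeas : ∀ j (H : Set V), IsAffineHyp j H → MeasurableSet H) (j : ℕ) :
    MeasurableSet (hyperplaneSkeleton Q j) := by
  induction j using Nat.strong_induction_on with
  | _ j ih =>
    rw [hyperplaneSkeleton_eq]
    exact (MeasurableSet.iUnion fun k => .iUnion (ih k)).union
      (.sUnion (countable_skeletonHyperplanes (hmeas j) ih) fun H hH => hmeas j H hH.1)

end Skeleton

/-- Claim 1 in the proof of Lemma 9: there are sets `W j`, each the union of the
preceding ones and of countably many `j`-dimensional hyperplanes, such that every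
`j`-dimensional hyperplane `H` satisfies `Q(H \ W j) = 0`. -/
theorem exists_countable_hyperplane_skeleton {V : Type*} [AddCommGroup V] [Module ℝ V]
    [MeasurableSpace V] (Q : Measure V) [IsProbabilityMeasure Q]
    (hmeas : ∀ (j : ℕ) (H : Set V), IsAffineHyp j H → MeasurableSet H) :
    ∃ W : ℕ → Set V,
      (∀ j : ℕ, ∃ S : Set (Set V), S.Countable ∧ (∀ H ∈ S, IsAffineHyp j H) ∧
        W j = (⋃ k < j, W k) ∪ ⋃₀ S) ∧
      ∀ (j : ℕ) (H : Set V), IsAffineHyp j H → Q (H \ W j) = 0 :=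
  ⟨hyperplaneSkeleton Q,
    fun j => ⟨skeletonHyperplanes Q j,
      countable_skeletonHyperplanes (hmeas j) fun k _ => measurableSet_hyperplaneSkeleton hmeas k,
      fun _ hH => hH.1, hyperplaneSkeleton_eq Q j⟩,
    fun _ _ => measure_diff_hyperplaneSkeleton⟩
end

section
/- Let Q be a probability measure on ℝᵈ (or any real vector space with hyperplanes measurable), let j ≥ 0, and let {Cᵢ} be an infinite sequence of distinct j-dimensional affine hyperplanes such that Q(Cᵢ) converges. Then the limit equals Q(F) for some hyperplane F of dimension less than j that is contained in Cᵢ for infinitely many i. In particular, Q(Cᵢ) cannot be strictly increasing. -/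
open MeasureTheory Filter

open Module Set Topology

variable {d : ℕ}

lemma image_add_eq_mk' (T : Submodule ℝ (EuclideanSpace ℝ (Fin d)))
    (x : EuclideanSpace ℝ (Fin d)) :
    (fun u => x + u) '' (T : Set _) = ↑(AffineSubspace.mk' x T) := by
  ext y
  rw [SetLike.mem_coe, AffineSubspace.mem_mk']
  constructor
  · rintro ⟨u, hu, rfl⟩
    simpa using hu
  · intro h
    exact ⟨y - x, h, by show x + (y - x) = y; rw [add_comm]; exact sub_add_cancel y x⟩

lemma isAffineHyp_coe (s : AffineSubspace ℝ (EuclideanSpace ℝ (Fin d)))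
    (hs : (s : Set (EuclideanSpace ℝ (Fin d))).Nonempty) :
    IsAffineHyp (finrank ℝ s.direction) (s : Set (EuclideanSpace ℝ (Fin d))) := by
  obtain ⟨x, hx⟩ := hs
  refine ⟨s.direction, x, inferInstance, rfl, ?_⟩
  rw [image_add_eq_mk', AffineSubspace.mk'_eq hx]

lemma isAffineHyp_iff {k : ℕ} {H : Set (EuclideanSpace ℝ (Fin d))} :
    IsAffineHyp k H ↔ ∃ s : AffineSubspace ℝ (EuclideanSpace ℝ (Fin d)),
      H = ↑s ∧ H.Nonempty ∧ finrank ℝ s.direction = k := by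
  constructor
  · rintro ⟨T, x, _, hT, rfl⟩
    rw [image_add_eq_mk']
    exact ⟨_, rfl, (AffineSubspace.mk'_nonempty x T), by rw [AffineSubspace.direction_mk']; exact hT⟩
  · rintro ⟨s, rfl, hne, rfl⟩
    exact isAffineHyp_coe s hne

lemma IsAffineHyp.measurableSet {k : ℕ} {H : Set (EuclideanSpace ℝ (Fin d))}
    (h : IsAffineHyp k H) : MeasurableSet H := by
  obtain ⟨s, rfl, -, -⟩ := isAffineHyp_iff.mp h
  exact s.closed_of_finiteDimensional.measurableSet

lemma IsAffineHyp.nonempty {k : ℕ} {H : Set (EuclideanSpace ℝ (Fin d))}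
    (h : IsAffineHyp k H) : H.Nonempty := by
  obtain ⟨s, rfl, hne, -⟩ := isAffineHyp_iff.mp h
  exact hne

/-- dimension is monotone under inclusion of planes -/
lemma IsAffineHyp.dim_le {k m : ℕ} {H G : Set (EuclideanSpace ℝ (Fin d))}
    (h : IsAffineHyp k H) (hG : IsAffineHyp m G) (hsub : H ⊆ G) : k ≤ m := by
  obtain ⟨s, rfl, hne, rfl⟩ := isAffineHyp_iff.mp h
  obtain ⟨t, rfl, -, rfl⟩ := isAffineHyp_iff.mp hG
  exact Submodule.finrank_mono (AffineSubspace.direction_le hsub)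

lemma IsAffineHyp.eq_of_subset_of_dim_le {k m : ℕ} {H G : Set (EuclideanSpace ℝ (Fin d))}
    (h : IsAffineHyp k H) (hG : IsAffineHyp m G) (hsub : H ⊆ G) (hd : m ≤ k) : H = G := by
  obtain ⟨s, rfl, hne, rfl⟩ := isAffineHyp_iff.mp h
  obtain ⟨t, rfl, -, rfl⟩ := isAffineHyp_iff.mp hG
  have hle : s ≤ t := hsub
  have hdir : s.direction = t.direction :=
    Submodule.eq_of_le_of_finrank_le (AffineSubspace.direction_le hle) hd
  obtain ⟨x, hx⟩ := hne
  rw [(AffineSubspace.eq_iff_direction_eq_of_mem hx (hle hx)).mpr hdir]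

lemma IsAffineHyp.dim_lt {k m : ℕ} {H G : Set (EuclideanSpace ℝ (Fin d))}
    (h : IsAffineHyp k H) (hG : IsAffineHyp m G) (hsub : H ⊂ G) : k < m := by
  rcases lt_or_ge k m with h' | h'
  · exact h'
  · exact absurd (h.eq_of_subset_of_dim_le hG hsub.subset h') hsub.ne

/-- nonempty intersection of two distinct planes of dimension `≤ j` is a plane of
dimension `< j`. -/
lemma inter_plane {j k₁ k₂ : ℕ} {H₁ H₂ : Set (EuclideanSpace ℝ (Fin d))}
    (h₁ : IsAffineHyp k₁ H₁) (h₂ : IsAffineHyp k₂ H₂) (hk₁ : k₁ ≤ j) (hk₂ : k₂ ≤ j)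
    (hne : H₁ ≠ H₂) (hInt : (H₁ ∩ H₂).Nonempty) :
    ∃ m, m < j ∧ IsAffineHyp m (H₁ ∩ H₂) := by
  obtain ⟨s, hs, hne₁, hd₁⟩ := isAffineHyp_iff.mp h₁
  obtain ⟨t, ht, hne₂, hd₂⟩ := isAffineHyp_iff.mp h₂
  have hcoe : H₁ ∩ H₂ = ↑(s ⊓ t) := by rw [hs, ht]; exact (AffineSubspace.coe_inf s t).symm
  rw [hcoe] at hInt ⊢
  have hplane := isAffineHyp_coe (s ⊓ t) hInt
  refine ⟨_, ?_, hplane⟩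
  have hsub₁ : (↑(s ⊓ t) : Set _) ⊆ H₁ := hs ▸ SetLike.coe_subset_coe.mpr inf_le_left
  have hsub₂ : (↑(s ⊓ t) : Set _) ⊆ H₂ := ht ▸ SetLike.coe_subset_coe.mpr inf_le_right
  have hle₁ : finrank ℝ (s ⊓ t).direction ≤ k₁ := hplane.dim_le h₁ hsub₁
  have hle₂ : finrank ℝ (s ⊓ t).direction ≤ k₂ := hplane.dim_le h₂ hsub₂
  rcases lt_or_ge (finrank ℝ (s ⊓ t).direction) j with h' | h'
  · exact h'
  · exfalso
    have e₁ : (↑(s ⊓ t) : Set _) = H₁ :=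
      hplane.eq_of_subset_of_dim_le h₁ hsub₁ (le_trans hk₁ (le_trans h' le_rfl))
    have e₂ : (↑(s ⊓ t) : Set _) = H₂ :=
      hplane.eq_of_subset_of_dim_le h₂ hsub₂ (le_trans hk₂ h')
    exact hne (e₁ ▸ e₂)

lemma bonferroni {α : Type*} [MeasurableSpace α] (μ : Measure α) (A : ℕ → Set α)
    (hA : ∀ i, MeasurableSet (A i)) (n : ℕ) :
    ∑ i ∈ Finset.range n, μ (A i) ≤
      μ Set.univ + ∑ k ∈ Finset.range n, ∑ i ∈ Finset.range k, μ (A i ∩ A k) := by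
  have key : ∀ m : ℕ, ∑ i ∈ Finset.range m, μ (A i) ≤
      μ (⋃ i ∈ Finset.range m, A i) +
        ∑ k ∈ Finset.range m, ∑ i ∈ Finset.range k, μ (A i ∩ A k) := by
    intro m
    induction m with
    | zero => simp
    | succ m ih =>
      rw [Finset.sum_range_succ, Finset.sum_range_succ (f := fun k => ∑ i ∈ Finset.range k, μ (A i ∩ A k))]
      have hU : (⋃ i ∈ Finset.range m, A i) ∪ A m = ⋃ i ∈ Finset.range (m + 1), A i := by
        rw [Finset.range_add_one, Finset.set_biUnion_insert]
        exact Set.union_comm _ _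
      have hsplit : μ (⋃ i ∈ Finset.range m, A i) + μ (A m)
          = μ (⋃ i ∈ Finset.range (m + 1), A i) + μ ((⋃ i ∈ Finset.range m, A i) ∩ A m) := by
        rw [← measure_union_add_inter _ (hA m), hU]
      have hint : μ ((⋃ i ∈ Finset.range m, A i) ∩ A m) ≤ ∑ i ∈ Finset.range m, μ (A i ∩ A m) := by
        have : (⋃ i ∈ Finset.range m, A i) ∩ A m = ⋃ i ∈ Finset.range m, (A i ∩ A m) := by
          simp [Set.iUnion_inter]
        rw [this]
        exact measure_biUnion_finset_le _ _
      calc ∑ i ∈ Finset.range m, μ (A i) + μ (A m)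
          ≤ (μ (⋃ i ∈ Finset.range m, A i) +
              ∑ k ∈ Finset.range m, ∑ i ∈ Finset.range k, μ (A i ∩ A k)) + μ (A m) :=
            add_le_add_left ih _
        _ = (μ (⋃ i ∈ Finset.range m, A i) + μ (A m)) +
              ∑ k ∈ Finset.range m, ∑ i ∈ Finset.range k, μ (A i ∩ A k) := by ring
        _ = (μ (⋃ i ∈ Finset.range (m + 1), A i) + μ ((⋃ i ∈ Finset.range m, A i) ∩ A m)) +
              ∑ k ∈ Finset.range m, ∑ i ∈ Finset.range k, μ (A i ∩ A k) := by rw [hsplit]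
        _ ≤ μ (⋃ i ∈ Finset.range (m + 1), A i) +
              (∑ k ∈ Finset.range m, ∑ i ∈ Finset.range k, μ (A i ∩ A k)
                + ∑ i ∈ Finset.range m, μ (A i ∩ A m)) := by
            rw [add_assoc]
            refine add_le_add_right ?_ _
            rw [add_comm]
            exact add_le_add_right hint _
  refine (key n).trans (add_le_add_left (measure_mono (Set.subset_univ _)) _)

lemma infinite_of_unbounded {S : Set ℕ} (h : ∀ N, ∃ i ∈ S, N ≤ i) : S.Infinite := by
  intro hfin
  obtain ⟨b, hb⟩ := hfin.bddAbove
  obtain ⟨i, hiS, hi⟩ := h (b + 1)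
  exact absurd (hb hiS) (by omega)

open ENNReal in
lemma main_aux (j : ℕ) : ∀ {d : ℕ} (ν : Measure (EuclideanSpace ℝ (Fin d))), ν Set.univ ≤ 1 →
    ∀ C : ℕ → Set (EuclideanSpace ℝ (Fin d)), (∀ i, ∃ m, m ≤ j ∧ IsAffineHyp m (C i)) →
    Function.Injective C → ∀ L : ℝ≥0∞, Tendsto (fun i => ν (C i)) atTop (𝓝 L) →
    ∃ F, (F = ∅ ∨ ∃ k, k < j ∧ IsAffineHyp k F) ∧ ν F = L ∧ {i | F ⊆ C i}.Infinite := by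
  induction j using Nat.strong_induction_on with
  | _ j IH =>
  intro d ν hν C hC hinj L hconv
  have hCm : ∀ i, MeasurableSet (C i) := fun i => (hC i).choose_spec.2.measurableSet
  have hLle : L ≤ 1 :=
    le_of_tendsto hconv (Eventually.of_forall fun i =>
      le_trans (measure_mono (Set.subset_univ _)) hν)
  have lemA : ∀ F : Set (EuclideanSpace ℝ (Fin d)), {i | F ⊆ C i}.Infinite → ν F ≤ L := by
    intro F hinf
    have hmono := Nat.nth_strictMono (p := fun i => F ⊆ C i) hinf
    have ht : Tendsto (fun n => ν (C (Nat.nth (fun i => F ⊆ C i) n))) atTop (𝓝 L) :=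
      hconv.comp hmono.tendsto_atTop
    exact ge_of_tendsto ht (Eventually.of_forall fun n =>
      measure_mono (Nat.nth_mem_of_infinite hinf n))
  have claimC : ∀ F : Set (EuclideanSpace ℝ (Fin d)), MeasurableSet F →
      {i | F ⊆ C i}.Infinite → ν F < L →
      ∃ F', (∃ k, k < j ∧ IsAffineHyp k F') ∧ {i | F' ⊆ C i}.Infinite ∧ F ⊂ F' := by
    intro F hFmeas hFinf hFlt
    set φ : ℕ → ℕ := Nat.nth (fun i => F ⊆ C i) with hφdef
    have hφmono : StrictMono φ := Nat.nth_strictMono hFinf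
    have hφmem : ∀ n, F ⊆ C (φ n) := fun n => Nat.nth_mem_of_infinite hFinf n
    set μ : Measure (EuclideanSpace ℝ (Fin d)) := ν.restrict Fᶜ with hμdef
    have hμapp : ∀ s : Set (EuclideanSpace ℝ (Fin d)), MeasurableSet s → μ s = ν (s ∩ Fᶜ) :=
      fun s hs => Measure.restrict_apply hs
    have hμuniv : μ Set.univ ≤ 1 := by
      rw [hμapp _ MeasurableSet.univ]
      exact le_trans (measure_mono Set.inter_subset_left) hν
    have hbne : ν F ≠ ⊤ := (lt_of_lt_of_le hFlt le_top).ne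
    have hdecomp : ∀ n, ν (C (φ n)) = μ (C (φ n)) + ν F := by
      intro n
      rw [hμapp _ (hCm _), ← Set.diff_eq]
      conv_lhs => rw [← measure_diff_add_inter (C (φ n)) hFmeas]
      rw [Set.inter_eq_right.mpr (hφmem n)]
    set δ := L - ν F with hδdef
    have hδpos : 0 < δ := tsub_pos_of_lt hFlt
    have hδne : δ ≠ ⊤ := ((le_trans tsub_le_self hLle).trans_lt ENNReal.one_lt_top).ne
    have htendμ : Tendsto (fun n => μ (C (φ n))) atTop (𝓝 δ) := by
      have h1 : Tendsto (fun n => ν (C (φ n))) atTop (𝓝 L) := hconv.comp hφmono.tendsto_atTop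
      have h2 : Tendsto (fun n => ν (C (φ n)) - ν F) atTop (𝓝 (L - ν F)) :=
        ((ENNReal.continuous_sub_right (ν F)).tendsto L).comp h1
      have heq : (fun n => μ (C (φ n))) = fun n => ν (C (φ n)) - ν F := by
        funext n
        rw [hdecomp n, ENNReal.add_sub_cancel_right hbne]
      rw [heq, hδdef]
      exact h2
    set η := δ / 2 with hηdef
    have hη0 : η ≠ 0 := by
      simp only [hηdef, ne_eq, ENNReal.div_eq_zero_iff]
      push_neg
      exact ⟨hδpos.ne', by norm_num⟩
    have hηt : η ≠ ⊤ := by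
      simp only [hηdef, ne_eq, ENNReal.div_eq_top]
      push_neg
      exact ⟨fun _ => by norm_num, fun h => absurd h hδne⟩
    have hq0 : η / 2 ≠ 0 := by
      simp only [ne_eq, ENNReal.div_eq_zero_iff]
      push_neg
      exact ⟨hη0, by norm_num⟩
    have hqt : η / 2 ≠ ⊤ := (ENNReal.div_lt_top hηt (by norm_num)).ne
    obtain ⟨n₀, hn₀⟩ := ENNReal.exists_nat_gt (ENNReal.inv_ne_top.mpr hq0)
    have h1n : 1 < (n₀ : ℝ≥0∞) * (η / 2) := by
      rw [← ENNReal.inv_mul_cancel hq0 hqt]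
      exact ENNReal.mul_lt_mul_left hq0 hqt hn₀
    have hn₀0 : (n₀ : ℝ≥0∞) ≠ 0 := by
      rintro h
      rw [h, zero_mul] at h1n
      exact absurd h1n (by simp)
    set c := (η / 2) / (n₀ : ℝ≥0∞) with hcdef
    have hc0 : c ≠ 0 := (ENNReal.div_pos hq0 (ENNReal.natCast_ne_top n₀)).ne'
    have hcn : (n₀ : ℝ≥0∞) * c = η / 2 := ENNReal.mul_div_cancel hn₀0 (ENNReal.natCast_ne_top n₀)
    have pairs : ∀ N : ℕ, ∃ a b : ℕ, F ⊆ C a ∧ F ⊆ C b ∧ N ≤ a ∧ N ≤ b ∧ a ≠ b ∧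
        c ≤ μ (C a ∩ C b) := by
      intro N
      by_contra hcon
      push_neg at hcon
      have hev : ∀ᶠ n in atTop, η < μ (C (φ n)) :=
        htendμ.eventually (eventually_gt_nhds (ENNReal.half_lt_self hδpos.ne' hδne))
      obtain ⟨M, hM⟩ := eventually_atTop.mp hev
      set s0 := max M N with hs0def
      have hbon := bonferroni μ (fun t => C (φ (s0 + t))) (fun t => hCm _) n₀
      have hφge : ∀ t : ℕ, N ≤ φ (s0 + t) := fun t =>
        le_trans (le_trans (le_max_right M N) (Nat.le_add_right s0 t)) hφmono.le_apply
      have hlb : (n₀ : ℝ≥0∞) * η ≤ ∑ t ∈ Finset.range n₀, μ (C (φ (s0 + t))) := by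
        calc (n₀ : ℝ≥0∞) * η = ∑ _t ∈ Finset.range n₀, η := by
              rw [Finset.sum_const, Finset.card_range, nsmul_eq_mul]
          _ ≤ _ := Finset.sum_le_sum fun t _ =>
              (hM (s0 + t) (le_trans (le_max_left M N) (Nat.le_add_right s0 t))).le
      have hub : ∑ k ∈ Finset.range n₀, ∑ i ∈ Finset.range k, μ (C (φ (s0 + i)) ∩ C (φ (s0 + k)))
          ≤ (n₀ : ℝ≥0∞) * ((n₀ : ℝ≥0∞) * c) := by
        calc ∑ k ∈ Finset.range n₀, ∑ i ∈ Finset.range k, μ (C (φ (s0 + i)) ∩ C (φ (s0 + k)))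
            ≤ ∑ k ∈ Finset.range n₀, ∑ _i ∈ Finset.range k, c := by
              refine Finset.sum_le_sum fun k _ => Finset.sum_le_sum fun i hi => ?_
              have hik : s0 + i < s0 + k := by
                have := Finset.mem_range.mp hi; omega
              exact (hcon (φ (s0 + i)) (φ (s0 + k)) (hφmem _) (hφmem _) (hφge i) (hφge k)
                (fun h => absurd (hφmono.injective h) (by omega))).le
          _ ≤ ∑ _k ∈ Finset.range n₀, (n₀ : ℝ≥0∞) * c := by
              refine Finset.sum_le_sum fun k hk => ?_
              rw [Finset.sum_const, Finset.card_range, nsmul_eq_mul]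
              exact mul_le_mul_left (by exact_mod_cast (Finset.mem_range.mp hk).le) c
          _ = (n₀ : ℝ≥0∞) * ((n₀ : ℝ≥0∞) * c) := by
              rw [Finset.sum_const, Finset.card_range, nsmul_eq_mul]
      have hchain : (n₀ : ℝ≥0∞) * η ≤ 1 + (n₀ : ℝ≥0∞) * (η / 2) := by
        calc (n₀ : ℝ≥0∞) * η ≤ ∑ t ∈ Finset.range n₀, μ (C (φ (s0 + t))) := hlb
          _ ≤ μ Set.univ + ∑ k ∈ Finset.range n₀, ∑ i ∈ Finset.range k,
                μ (C (φ (s0 + i)) ∩ C (φ (s0 + k))) := hbon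
          _ ≤ 1 + (n₀ : ℝ≥0∞) * ((n₀ : ℝ≥0∞) * c) := add_le_add hμuniv hub
          _ = 1 + (n₀ : ℝ≥0∞) * (η / 2) := by rw [hcn]
      have hsplit2 : (n₀ : ℝ≥0∞) * η = (n₀ : ℝ≥0∞) * (η / 2) + (n₀ : ℝ≥0∞) * (η / 2) := by
        rw [← mul_add, ENNReal.add_halves]
      have hne2 : (n₀ : ℝ≥0∞) * (η / 2) ≠ ⊤ :=
        ENNReal.mul_ne_top (ENNReal.natCast_ne_top n₀) hqt
      have : (1 : ℝ≥0∞) + (n₀ : ℝ≥0∞) * (η / 2) < (n₀ : ℝ≥0∞) * η := by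
        rw [hsplit2]
        exact ENNReal.add_lt_add_right hne2 h1n
      exact absurd (lt_of_lt_of_le this hchain) (by simp)
    choose pa pb hpa hpb hpaN hpbN hpab hpc using pairs
    set P : ℕ → Set (EuclideanSpace ℝ (Fin d)) := fun N => C (pa N) ∩ C (pb N) with hPdef
    have hPmeas : ∀ N, MeasurableSet (P N) := fun N => (hCm _).inter (hCm _)
    have hPne : ∀ N, (P N ∩ Fᶜ).Nonempty := by
      intro N
      apply nonempty_of_measure_ne_zero (μ := ν)
      rw [← hμapp _ (hPmeas N)]
      exact (lt_of_lt_of_le (pos_iff_ne_zero.mpr hc0) (hpc N)).ne'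
    have hPplane : ∀ N, ∃ m, m < j ∧ IsAffineHyp m (P N) := by
      intro N
      obtain ⟨m1, hm1, hP1⟩ := hC (pa N)
      obtain ⟨m2, hm2, hP2⟩ := hC (pb N)
      exact inter_plane hP1 hP2 hm1 hm2 (fun h => hpab N (hinj h))
        ((hPne N).mono Set.inter_subset_left)
    have hFP : ∀ N, F ⊆ P N := fun N => Set.subset_inter (hpa N) (hpb N)
    by_cases hfin : (Set.range P).Finite
    · haveI := hfin.to_subtype
      obtain ⟨⟨P₀, hP₀mem⟩, hfib⟩ := Finite.exists_infinite_fiber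
        (fun N => (⟨P N, Set.mem_range_self N⟩ : Set.range P))
      have hfib' : {N | P N = P₀}.Infinite := by
        have hpre : (fun N => (⟨P N, Set.mem_range_self N⟩ : Set.range P)) ⁻¹' {⟨P₀, hP₀mem⟩}
            = {N | P N = P₀} := by
          ext N
          simp [Subtype.ext_iff]
        rw [← hpre]
        exact Set.infinite_coe_iff.mp hfib
      obtain ⟨N₁, hN₁⟩ := hfib'.nonempty
      refine ⟨P₀, ?_, ?_, ?_⟩
      · obtain ⟨m, hm, hpl⟩ := hPplane N₁
        exact ⟨m, hm, hN₁ ▸ hpl⟩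
      · apply Set.infinite_of_forall_exists_gt
        intro M
        obtain ⟨N₂, hN₂mem, hN₂⟩ := hfib'.exists_gt M
        refine ⟨pa N₂, ?_, lt_of_lt_of_le hN₂ (hpaN N₂)⟩
        have : P N₂ = P₀ := hN₂mem
        rw [Set.mem_setOf_eq, ← this]
        exact Set.inter_subset_left
      · rw [Set.ssubset_def]
        refine ⟨hN₁ ▸ hFP N₁, fun hsub => ?_⟩
        obtain ⟨x, hx1, hx2⟩ := hPne N₁
        have hx1' : x ∈ P₀ := (show P N₁ = P₀ from hN₁) ▸ hx1
        exact hx2 (hsub hx1')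
    · have hinfr : (Set.range P).Infinite := hfin
      set emb : ℕ ↪ ↥(Set.range P) := Set.Infinite.natEmbedding _ hinfr with hembdef
      set g : ℕ → Set (EuclideanSpace ℝ (Fin d)) := fun n => (emb n).1 with hgdef
      have hginj : Function.Injective g := fun a b h =>
        emb.injective (Subtype.ext h)
      have hgP : ∀ n, ∃ N, P N = g n := fun n => (emb n).2
      have hgc : ∀ n, c ≤ μ (g n) := by
        intro n
        obtain ⟨N, hN⟩ := hgP n
        rw [← hN]
        exact hpc N
      obtain ⟨L', -, ψ, hψmono, hψtend⟩ :=
        isCompact_univ.tendsto_subseq (x := fun n => μ (g n)) (fun n => Set.mem_univ _)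
      have hL'c : c ≤ L' := ge_of_tendsto hψtend (Eventually.of_forall fun n => hgc (ψ n))
      obtain ⟨m0, hm0, -⟩ := hPplane 0
      have hj1 : 1 ≤ j := by omega
      have hCP : ∀ p, ∃ m, m ≤ j - 1 ∧ IsAffineHyp m (g (ψ p)) := by
        intro p
        obtain ⟨N, hN⟩ := hgP (ψ p)
        obtain ⟨m, hm, hpl⟩ := hPplane N
        exact ⟨m, by omega, hN ▸ hpl⟩
      obtain ⟨G, hGkind, hGL', hGinf⟩ := IH (j - 1) (by omega) μ hμuniv
        (fun p => g (ψ p)) hCP (hginj.comp hψmono.injective) L' hψtend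
      have hGne : G.Nonempty := by
        rcases Set.eq_empty_or_nonempty G with h | h
        · exfalso
          rw [h, measure_empty] at hGL'
          exact hc0 (le_antisymm (hGL' ▸ hL'c) zero_le)
        · exact h
      obtain ⟨kG, hkG, hGpl⟩ : ∃ k, k < j ∧ IsAffineHyp k G := by
        rcases hGkind with h | ⟨k, hk, hpl⟩
        · exact absurd h hGne.ne_empty
        · exact ⟨k, by omega, hpl⟩
      have hGmeas : MeasurableSet G := hGpl.measurableSet
      have hJ : {i | F ⊆ C i ∧ G ⊆ C i}.Infinite := by
        by_contra hJfin
        rw [Set.not_infinite] at hJfin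
        have himg : ((fun q => g (ψ q)) '' {q | G ⊆ g (ψ q)}).Infinite :=
          hGinf.image (Set.injOn_of_injective (hginj.comp hψmono.injective))
        apply himg
        apply Set.Finite.subset ((hJfin.prod hJfin).image
          (fun p : ℕ × ℕ => C p.1 ∩ C p.2))
        rintro S ⟨q, hq, rfl⟩
        obtain ⟨N, hN⟩ := hgP (ψ q)
        have hGsub : G ⊆ P N := hN ▸ hq
        refine ⟨(pa N, pb N), ⟨⟨hpa N, hGsub.trans Set.inter_subset_left⟩,
          ⟨hpb N, hGsub.trans Set.inter_subset_right⟩⟩, ?_⟩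
        exact hN
      set F' : Set (EuclideanSpace ℝ (Fin d)) := ↑(affineSpan ℝ (F ∪ G)) with hF'def
      have hsubspan : ∀ i, F ⊆ C i → G ⊆ C i → F' ⊆ C i := by
        intro i hFi hGi
        obtain ⟨s, hsC, -, -⟩ := isAffineHyp_iff.mp (hC i).choose_spec.2
        rw [hsC]
        exact SetLike.coe_subset_coe.mpr (affineSpan_le.mpr
          (by rw [← hsC]; exact Set.union_subset hFi hGi))
      have hF'inf : {i | F' ⊆ C i}.Infinite := hJ.mono (fun i hi => hsubspan i hi.1 hi.2)
      obtain ⟨i1, hi1, i2, hi2, hi12⟩ := hJ.nontrivial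
      have hF'ne : F'.Nonempty :=
        hGne.mono ((Set.subset_union_right).trans (subset_affineSpan ℝ _))
      have hF'sub : F' ⊆ C i1 ∩ C i2 :=
        Set.subset_inter (hsubspan i1 hi1.1 hi1.2) (hsubspan i2 hi2.1 hi2.2)
      obtain ⟨m', hm'j, hm'pl⟩ : ∃ m', m' < j ∧ IsAffineHyp m' (C i1 ∩ C i2) := by
        obtain ⟨ma, hma, hA⟩ := hC i1
        obtain ⟨mb, hmb, hB⟩ := hC i2
        exact inter_plane hA hB hma hmb (fun h => hi12 (hinj h)) (hF'ne.mono hF'sub)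
      have hF'pl : IsAffineHyp (finrank ℝ (affineSpan ℝ (F ∪ G)).direction) F' :=
        isAffineHyp_coe _ hF'ne
      have hdim : finrank ℝ (affineSpan ℝ (F ∪ G)).direction < j :=
        lt_of_le_of_lt (hF'pl.dim_le hm'pl hF'sub) hm'j
      refine ⟨F', ⟨_, hdim, hF'pl⟩, hF'inf, ?_⟩
      rw [Set.ssubset_def]
      constructor
      · exact (Set.subset_union_left).trans (subset_affineSpan ℝ _)
      · intro hsub
        have hμG : μ G ≠ 0 := by
          rw [hGL']
          exact fun h => hc0 (le_antisymm (h ▸ hL'c) zero_le)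
        rw [hμapp _ hGmeas] at hμG
        obtain ⟨x, hx1, hx2⟩ := nonempty_of_measure_ne_zero hμG
        exact hx2 (hsub ((subset_affineSpan ℝ _) (Set.mem_union_right F hx1)))
  have D : ∀ t : ℕ, ∀ F r, ((F = ∅ ∧ r = 0) ∨ ∃ k, k < j ∧ IsAffineHyp k F ∧ r = k + 1) →
      {i | F ⊆ C i}.Infinite → j ≤ r + t →
      ∃ F₀, (F₀ = ∅ ∨ ∃ k, k < j ∧ IsAffineHyp k F₀) ∧ ν F₀ = L ∧ {i | F₀ ⊆ C i}.Infinite := by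
    intro t
    induction t with
    | zero =>
      intro F r hr hinf hjr
      rcases eq_or_lt_of_le (lemA F hinf) with heq | hlt
      · refine ⟨F, ?_, heq, hinf⟩
        rcases hr with ⟨h1, _⟩ | ⟨k, hk, hpl, _⟩
        exacts [Or.inl h1, Or.inr ⟨k, hk, hpl⟩]
      · exfalso
        have hFmeas : MeasurableSet F := by
          rcases hr with ⟨h1, _⟩ | ⟨k, _, hpl, _⟩
          · rw [h1]; exact MeasurableSet.empty
          · exact hpl.measurableSet
        obtain ⟨F', ⟨k', hk', hpl'⟩, hinf', hss⟩ := claimC F hFmeas hinf hlt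
        have hrk : r ≤ k' := by
          rcases hr with ⟨h1, h2⟩ | ⟨k, hk, hpl, h2⟩
          · omega
          · have := hpl.dim_lt hpl' hss
            omega
        omega
    | succ t iht =>
      intro F r hr hinf hjr
      rcases eq_or_lt_of_le (lemA F hinf) with heq | hlt
      · refine ⟨F, ?_, heq, hinf⟩
        rcases hr with ⟨h1, _⟩ | ⟨k, hk, hpl, _⟩
        exacts [Or.inl h1, Or.inr ⟨k, hk, hpl⟩]
      · have hFmeas : MeasurableSet F := by
          rcases hr with ⟨h1, _⟩ | ⟨k, _, hpl, _⟩
          · rw [h1]; exact MeasurableSet.empty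
          · exact hpl.measurableSet
        obtain ⟨F', ⟨k', hk', hpl'⟩, hinf', hss⟩ := claimC F hFmeas hinf hlt
        have hrk : r ≤ k' := by
          rcases hr with ⟨h1, h2⟩ | ⟨k, hk, hpl, h2⟩
          · omega
          · have := hpl.dim_lt hpl' hss
            omega
        exact iht F' (k' + 1) (Or.inr ⟨k', hk', hpl', rfl⟩) hinf' (by omega)
  have huniv : {i : ℕ | (∅ : Set (EuclideanSpace ℝ (Fin d))) ⊆ C i}.Infinite := by
    have : {i : ℕ | (∅ : Set (EuclideanSpace ℝ (Fin d))) ⊆ C i} = Set.univ := by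
      ext i; simp
    rw [this]
    exact Set.infinite_univ
  exact D j ∅ 0 (Or.inl ⟨rfl, rfl⟩) huniv (by omega)

/-- Lemma 9: if `Q(Cᵢ)` converges along an infinite sequence of distinct
`j`-dimensional affine hyperplanes, the limit is `Q(F)` for some hyperplane `F` of
dimension `< j` (the empty set counting as the hyperplane of dimension -1)
contained in infinitely many `Cᵢ`; in particular `Q(Cᵢ)` cannot be strictly
increasing. -/
theorem hyperplane_measure_limit {d : ℕ}
    (Q : Measure (EuclideanSpace ℝ (Fin d))) [IsProbabilityMeasure Q]
    (j : ℕ) (C : ℕ → Set (EuclideanSpace ℝ (Fin d)))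
    (hC : ∀ i, IsAffineHyp j (C i))
    (hdist : Function.Injective C)
    (L : ENNReal)
    (hconv : Tendsto (fun i => Q (C i)) atTop (nhds L)) :
    (∃ F : Set (EuclideanSpace ℝ (Fin d)),
      (F = ∅ ∨ ∃ k < j, IsAffineHyp k F) ∧
      Q F = L ∧ {i : ℕ | F ⊆ C i}.Infinite) ∧
    ¬StrictMono (fun i => Q (C i)) := by
  obtain ⟨F, hkind, hQF, hinf⟩ := main_aux j Q (by simp) C (fun i => ⟨j, le_rfl, hC i⟩)
    hdist L hconv
  refine ⟨⟨F, ?_, hQF, hinf⟩, ?_⟩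
  · rcases hkind with h | ⟨k, hk, hpl⟩
    exacts [Or.inl h, Or.inr ⟨k, hk, hpl⟩]
  · intro hmono
    have hsup : Tendsto (fun i => Q (C i)) atTop (𝓝 (⨆ i, Q (C i))) :=
      tendsto_atTop_iSup hmono.monotone
    have hLs : L = ⨆ i, Q (C i) := tendsto_nhds_unique hconv hsup
    obtain ⟨i₀, hi₀⟩ := hinf.nonempty
    have h1 : Q F ≤ Q (C i₀) := measure_mono hi₀
    have h2 : Q (C i₀) < Q (C (i₀ + 1)) := hmono (lt_add_one i₀)
    have h3 : Q (C (i₀ + 1)) ≤ ⨆ i, Q (C i) := le_iSup (fun i => Q (C i)) (i₀ + 1)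
    rw [← hLs, ← hQF] at h3
    exact absurd ((h1.trans_lt h2).trans_le h3) (lt_irrefl _)
end

section
/- Let ν′ > 0, d ≥ 1, and let Q be a probability measure on ℝ^{d+1} concentrated on {z : z_{d+1} = 1}. Suppose B ∈ 𝒫_{d+1} satisfies the fixed-point equation B = ∫ u_{ν′,d+1}(z′B⁻¹z) z z′ dQ(z), where u_{ν′,d+1}(s) = (ν′+d+1)/(ν′+s). Then the (d+1,d+1) entry of B equals ∫ u_{ν′,d+1}(z′B⁻¹z) dQ(z), and moreover ∫ u_{ν′,d+1}(z′B⁻¹z) dQ(z) = 1, i.e., B_{d+1,d+1} = 1. -/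
/-!
Write `A = B⁻¹`, `s(z) = z'Az` and `u(s) = (ν'+d+1)/(ν'+s)`. Multiplying the fixed-point equation
by `A` and taking traces gives `d + 1 = tr(AB) = ∫ u(s) s dQ`. Since `u(s) s = (ν'+d+1) - ν' u(s)`,
this says `ν' ∫ u(s) dQ = ν'`, so `∫ u(s) dQ = 1`. Finally `z_{d+1} = 1` `Q`-a.s., so the
`(d+1, d+1)` entry of the fixed-point equation reads `B_{d+1,d+1} = ∫ u(s) dQ`.
-/

open Matrix MeasureTheory

section Weight

variable {α : Type*} [MeasurableSpace α] {μ : Measure α} {ν : ℝ} {q : α → ℝ}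

lemma integrable_div_add_of_nonneg [IsFiniteMeasure μ] (c : ℝ) (hν : 0 < ν)
    (hq : ∀ a, 0 ≤ q a) (hqm : Measurable q) :
    Integrable (fun a => c / (ν + q a)) μ := by
  refine (integrable_const (|c| / ν)).mono'
    (measurable_const.div (measurable_const.add hqm)).aestronglyMeasurable
    (ae_of_all _ fun a => ?_)
  rw [norm_div, Real.norm_eq_abs, Real.norm_of_nonneg (add_nonneg hν.le (hq a))]
  exact div_le_div_of_nonneg_left (abs_nonneg c) hν (le_add_of_nonneg_right (hq a))

lemma integral_div_add_eq_one_of_integral_mul_eq [IsProbabilityMeasure μ] {m : ℝ} (hν : 0 < ν)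
    (hq : ∀ a, 0 ≤ q a) (hqm : Measurable q)
    (h : ∫ a, (ν + m) / (ν + q a) * q a ∂μ = m) :
    ∫ a, (ν + m) / (ν + q a) ∂μ = 1 := by
  have hu := integrable_div_add_of_nonneg (μ := μ) (ν + m) hν hq hqm
  have hsplit : ∀ a, (ν + m) / (ν + q a) * q a = (ν + m) - ν * ((ν + m) / (ν + q a)) := by
    intro a
    have : ν + q a ≠ 0 := (add_pos_of_pos_of_nonneg hν (hq a)).ne'
    field_simp
    ring
  simp only [hsplit] at h
  rw [integral_sub (integrable_const _) (hu.const_mul ν), integral_const_mul,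
    integral_const, probReal_univ, one_smul] at h
  exact mul_left_cancel₀ hν.ne' (by linarith)

end Weight

lemma Integrable.mul_mul_of_mul_sq {α : Type*} [MeasurableSpace α] {μ : Measure α}
    {w x y : α → ℝ} (hw : ∀ a, 0 ≤ w a)
    (hmeas : AEStronglyMeasurable (fun a => w a * (x a * y a)) μ)
    (hx : Integrable (fun a => w a * (x a * x a)) μ)
    (hy : Integrable (fun a => w a * (y a * y a)) μ) :
    Integrable (fun a => w a * (x a * y a)) μ := by
  refine ((hx.add hy).div_const 2).mono' hmeas (ae_of_all _ fun a => ?_)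
  rw [Pi.add_apply, norm_mul, Real.norm_of_nonneg (hw a), norm_mul, Real.norm_eq_abs,
    Real.norm_eq_abs]
  have hamgm := two_mul_le_add_sq |x a| |y a|
  rw [sq_abs, sq_abs] at hamgm
  nlinarith [mul_le_mul_of_nonneg_left hamgm (hw a)]

lemma Matrix.trace_mul_eq_integral_dotProduct_mulVec {n : Type*} [Fintype n]
    {μ : Measure (n → ℝ)} {w : (n → ℝ) → ℝ} (A B : Matrix n n ℝ)
    (hB : ∀ i j, B i j = ∫ z, w z * (z i * z j) ∂μ)
    (hint : ∀ i j, Integrable (fun z => w z * (z i * z j)) μ) :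
    trace (A * B) = ∫ z, w z * (z ⬝ᵥ A *ᵥ z) ∂μ := by
  have hexpand : ∀ z : n → ℝ,
      w z * (z ⬝ᵥ A *ᵥ z) = ∑ i, ∑ j, A i j * (w z * (z j * z i)) := by
    intro z
    simp only [dotProduct, mulVec, Finset.mul_sum]
    exact Finset.sum_congr rfl fun i _ => Finset.sum_congr rfl fun j _ => by ring
  simp only [hexpand]
  rw [integral_finsetSum (f := fun i z => ∑ j, A i j * (w z * (z j * z i))) _
    fun i _ => integrable_finsetSum _ fun j _ => (hint j i).const_mul _]
  simp only [trace, diag, mul_apply, hB]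
  refine Finset.sum_congr rfl fun i _ => ?_
  rw [integral_finsetSum (f := fun j z => A i j * (w z * (z j * z i))) _
    fun j _ => (hint j i).const_mul _]
  simp only [integral_const_mul]

/-- Theorem 12(b): if `Q` lives on `{z : z_{d+1} = 1}` and `B ∈ 𝒫_{d+1}` satisfies
the fixed-point equation `B = ∫ u(z'B⁻¹z) zz' dQ(z)` with
`u(s) = (ν'+d+1)/(ν'+s)`, then `B_{d+1,d+1} = ∫ u(z'B⁻¹z) dQ(z) = 1`. -/
theorem fixedPoint_last_entry_one {d : ℕ} {ν' : ℝ} (hν' : 0 < ν')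
    (Q : Measure (Fin d ⊕ Unit → ℝ)) [IsProbabilityMeasure Q]
    (hconc : Q {z | z (Sum.inr ()) = 1} = 1)
    (B : Matrix (Fin d ⊕ Unit) (Fin d ⊕ Unit) ℝ) (hB : B.PosDef)
    (hfix : ∀ i j, B i j =
      ∫ z, (ν' + d + 1) / (ν' + z ⬝ᵥ B⁻¹.mulVec z) * (z i * z j) ∂Q) :
    B (Sum.inr ()) (Sum.inr ()) =
      ∫ z, (ν' + d + 1) / (ν' + z ⬝ᵥ B⁻¹.mulVec z) ∂Q ∧
    ∫ z, (ν' + d + 1) / (ν' + z ⬝ᵥ B⁻¹.mulVec z) ∂Q = 1 := by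
  have hq : ∀ z : Fin d ⊕ Unit → ℝ, 0 ≤ z ⬝ᵥ B⁻¹ *ᵥ z := hB.inv.posSemidef.dotProduct_mulVec_nonneg
  have hqc : Continuous fun z : Fin d ⊕ Unit → ℝ => z ⬝ᵥ B⁻¹ *ᵥ z := by fun_prop
  have hu : ∀ z : Fin d ⊕ Unit → ℝ, 0 ≤ (ν' + d + 1) / (ν' + z ⬝ᵥ B⁻¹ *ᵥ z) := fun z =>
    div_nonneg (by positivity) (add_nonneg hν'.le (hq z))
  -- the diagonal integrals are nonzero, hence their integrands are integrable
  have hdiag : ∀ i, Integrable (fun z => (ν' + d + 1) / (ν' + z ⬝ᵥ B⁻¹ *ᵥ z) * (z i * z i)) Q :=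
    fun i => Integrable.of_integral_ne_zero ((hfix i i).symm.trans_ne hB.diag_pos.ne')
  have hint : ∀ i j,
      Integrable (fun z => (ν' + d + 1) / (ν' + z ⬝ᵥ B⁻¹ *ᵥ z) * (z i * z j)) Q := by
    refine fun i j => Integrable.mul_mul_of_mul_sq hu (Continuous.aestronglyMeasurable ?_)
      (hdiag i) (hdiag j)
    exact (continuous_const.div (continuous_const.add hqc) fun z =>
      (add_pos_of_pos_of_nonneg hν' (hq z)).ne').mul (by fun_prop)
  have htrace : ∫ z, (ν' + (d + 1)) / (ν' + z ⬝ᵥ B⁻¹ *ᵥ z) * (z ⬝ᵥ B⁻¹ *ᵥ z) ∂Q = d + 1 := by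
    rw [← add_assoc, ← trace_mul_eq_integral_dotProduct_mulVec B⁻¹ B hfix hint,
      nonsing_inv_mul B (isUnit_iff_ne_zero.mpr hB.det_pos.ne'), trace_one]
    simp
  have hone := integral_div_add_eq_one_of_integral_mul_eq hν' hq hqc.measurable htrace
  rw [← add_assoc] at hone
  refine ⟨?_, hone⟩
  have hae : ∀ᵐ z ∂Q, z (Sum.inr ()) = 1 := by
    have hmeas : MeasurableSet {z : Fin d ⊕ Unit → ℝ | z (Sum.inr ()) = 1} :=
      measurableSet_eq_fun (measurable_pi_apply _) measurable_const
    rw [ae_iff_measure_eq hmeas.nullMeasurableSet, hconc, measure_univ]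
  rw [hfix]
  refine integral_congr_ae ?_
  filter_upwards [hae] with z hz
  rw [hz, mul_one, mul_one]
end

section
/- Let d ≥ 2, and μ a map assigning to each d×n data matrix X (for a fixed n) a point in ℝᵈ, invariant under permutations of columns, such that μ(AX + v𝟏ₙ′) = Aμ(X) + v for every d×d matrix A (possibly singular) and v ∈ ℝᵈ. Then μ(X) = X̄, the sample mean of the columns of X. -/
/-!
The rank-one matrix whose rows all equal `w` sends `X` to the matrix whose rows all equal
`w ᵥ* X`, so by equivariance `μ (replicateRow (w ᵥ* X))` is the constant vector `w ⬝ᵥ μ X`.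
With `w` a basis vector this gives `μ X i = g (X i)` for one functional `g` of a single row;
with `w = eᵢ + eⱼ`, `i ≠ j` (this is where `d ≥ 2` enters) it shows that `g` is additive.
Column permutations make `g` symmetric and translations give `g (c, …, c) = c`, which together
force `g` to be the mean.
-/

open Matrix

theorem AddMonoidHom.eq_sum_div_card_of_perm_invariant {ι : Type*} [Fintype ι] [DecidableEq ι]
    (g : (ι → ℝ) →+ ℝ) (hperm : ∀ (x : ι → ℝ) (σ : Equiv.Perm ι), g (x ∘ σ) = g x)
    (hconst : ∀ c : ℝ, g (fun _ => c) = c) (x : ι → ℝ) :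
    g x = (∑ i, x i) / Fintype.card ι := by
  have hsingle : ∀ (i j : ι) (c : ℝ), g (Pi.single i c) = g (Pi.single j c) := fun i j c => by
    rw [← hperm _ (Equiv.swap i j), Pi.single_comp_equiv, Equiv.symm_swap, Equiv.swap_apply_left]
  have hsingle_eq : ∀ (j : ι) (c : ℝ), g (Pi.single j c) = c / Fintype.card ι := fun j c => by
    have : Nonempty ι := ⟨j⟩
    have h := hconst c
    rw [← Finset.univ_sum_single (fun _ : ι => c), map_sum,
      Finset.sum_congr rfl fun i _ => hsingle i j c, Finset.sum_const, Finset.card_univ,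
      nsmul_eq_mul] at h
    rw [eq_div_iff (by simp), mul_comm, h]
  calc g x = ∑ j, g (Pi.single j (x j)) := by rw [← map_sum, Finset.univ_sum_single]
    _ = (∑ i, x i) / Fintype.card ι := by
      rw [Finset.sum_div]
      exact Finset.sum_congr rfl fun j _ => hsingle_eq j (x j)

section AffineEquivariant

variable {m ι : Type*} [Fintype m]

def IsAffineEquivariant (μ : Matrix m ι ℝ → m → ℝ) : Prop :=
  ∀ (A : Matrix m m ℝ) (v : m → ℝ) (X : Matrix m ι ℝ),
    μ (A * X + of fun i _ => v i) = A *ᵥ μ X + v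

namespace IsAffineEquivariant

variable {μ : Matrix m ι ℝ → m → ℝ}

theorem map_mul (hμ : IsAffineEquivariant μ) (A : Matrix m m ℝ) (X : Matrix m ι ℝ) :
    μ (A * X) = A *ᵥ μ X := by
  simpa [show (of fun (_ : m) (_ : ι) => (0 : ℝ)) = 0 from rfl] using hμ A 0 X

theorem map_replicateRow_const (hμ : IsAffineEquivariant μ) (c : ℝ) (k : m) :
    μ (replicateRow m fun _ => c) k = c := by
  simpa [replicateRow] using congrFun (hμ 0 (fun _ => c) 0) k

theorem map_replicateRow_vecMul (hμ : IsAffineEquivariant μ) (w : m → ℝ) (X : Matrix m ι ℝ) :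
    μ (replicateRow m (w ᵥ* X)) = Function.const m (w ⬝ᵥ μ X) := by
  rw [replicateRow_vecMul, hμ.map_mul, replicateRow_mulVec_eq_const]

variable [DecidableEq m]

theorem apply_eq_map_replicateRow_row (hμ : IsAffineEquivariant μ) (X : Matrix m ι ℝ)
    (i k : m) :
    μ X i = μ (replicateRow m (X.row i)) k := by
  rw [← single_one_vecMul, hμ.map_replicateRow_vecMul, Function.const_apply,
    single_one_dotProduct]

theorem map_replicateRow_add (hμ : IsAffineEquivariant μ) [Nontrivial m] (x y : ι → ℝ) (k : m) :
    μ (replicateRow m (x + y)) k = μ (replicateRow m x) k + μ (replicateRow m y) k := by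
  obtain ⟨i, j, hij⟩ := exists_pair_ne m
  let X : Matrix m ι ℝ := of fun a l => if a = i then x l else y l
  have hXi : X.row i = x := by ext; simp [X]
  have hXj : X.row j = y := by ext; simp [X, hij.symm]
  have hsum : (Pi.single i 1 + Pi.single j 1) ᵥ* X = x + y := by
    rw [add_vecMul, single_one_vecMul, single_one_vecMul, hXi, hXj]
  rw [← hsum, hμ.map_replicateRow_vecMul, Function.const_apply, add_dotProduct,
    single_one_dotProduct, single_one_dotProduct, ← hXi, ← hXj,
    ← hμ.apply_eq_map_replicateRow_row, ← hμ.apply_eq_map_replicateRow_row]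

end IsAffineEquivariant

end AffineEquivariant

theorem location_functional_is_mean_general {d n : ℕ} (hd : 2 ≤ d)
    (μ : Matrix (Fin d) (Fin n) ℝ → (Fin d → ℝ))
    (hperm : ∀ (X : Matrix (Fin d) (Fin n) ℝ) (σ : Equiv.Perm (Fin n)),
      μ (X.submatrix id σ) = μ X)
    (hequiv : ∀ (A : Matrix (Fin d) (Fin d) ℝ) (v : Fin d → ℝ)
      (X : Matrix (Fin d) (Fin n) ℝ),
      μ (A * X + Matrix.of fun i _ => v i) = A.mulVec (μ X) + v) :
    ∀ X : Matrix (Fin d) (Fin n) ℝ, μ X = fun i => (∑ j, X i j) / n := by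
  have hμ : IsAffineEquivariant μ := hequiv
  have : Nontrivial (Fin d) := Fin.nontrivial_iff_two_le.mpr hd
  intro X
  funext i
  let g : (Fin n → ℝ) →+ ℝ :=
    AddMonoidHom.mk' (fun x => μ (replicateRow (Fin d) x) i) (hμ.map_replicateRow_add · · i)
  have hg_perm : ∀ (x : Fin n → ℝ) (σ : Equiv.Perm (Fin n)), g (x ∘ σ) = g x :=
    fun x σ => congrFun (hperm (replicateRow (Fin d) x) σ) i
  calc μ X i = g (X.row i) := hμ.apply_eq_map_replicateRow_row X i i
    _ = (∑ j, X i j) / n := by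
      rw [g.eq_sum_div_card_of_perm_invariant hg_perm (hμ.map_replicateRow_const · i),
        Fintype.card_fin]
      rfl

/-- Theorem 4(a) (Obenchain): a permutation-invariant, singularly affine equivariant
location functional on d×n data matrices (d ≥ 2) is the sample mean. -/
theorem location_functional_is_mean {d n : ℕ} (hd : 2 ≤ d) (hn : 1 ≤ n)
    (μ : Matrix (Fin d) (Fin n) ℝ → (Fin d → ℝ))
    (hperm : ∀ (X : Matrix (Fin d) (Fin n) ℝ) (σ : Equiv.Perm (Fin n)),
      μ (X.submatrix id σ) = μ X)
    (hequiv : ∀ (A : Matrix (Fin d) (Fin d) ℝ) (v : Fin d → ℝ)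
      (X : Matrix (Fin d) (Fin n) ℝ),
      μ (A * X + Matrix.of fun i _ => v i) = A.mulVec (μ X) + v) :
    ∀ X : Matrix (Fin d) (Fin n) ℝ, μ X = fun i => (∑ j, X i j) / n :=
  location_functional_is_mean_general hd μ hperm hequiv
end
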